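/- arXiv:1411.2169 — 7 statements merged into one kernel-verified Lean document; each statement's English description precedes it below -/
import Mathlib

section
/- Let G be a connected undirected graph and let e, f be edges with f ≠ e and f ≠ \bar{e}. Then at least one of e, \bar{e} is connected to at least one of f, \bar{f} by an admissible path in G. -/
/-- Edge `e` is connected to edge `g` by an admissible path: there is a list of
edges beginning with `e` and ending with `g` in which consecutive edges satisfy
`τ a = σ b` and `b ≠ bar a` (the single-edge list `[e]` covers the case `e = g`). -/
def AdmConn {E V : Type*} (σ τ : E → V) (bar : E → E) (e g : E) : Prop :=
  ∃ p : List E, p.head? = some e ∧ p.getLast? = some g ∧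
    p.Chain' (fun a b => τ a = σ b ∧ b ≠ bar a)

/-!
Walk along a path of vertices from `τ e` to `σ f`, keeping an admissible path from `e` or `bar e`
whose last edge ends at the current vertex. An edge other than the reverse of the last edge `h`
extends the path; the reverse of `h` is handled by deleting `h`, or, when the path is just `[h]`,
by replacing it with `[bar h]`. At `σ f` one appends `f`, unless the last edge is `bar f`, in
which case the path already ends at `bar f`.
-/

open Relation

section

variable {E V : Type*} (σ τ : E → V) (bar : E → E)

def AdmStep (a b : E) : Prop := τ a = σ b ∧ b ≠ bar a

theorem admConn_iff_reflTransGen {a b : E} :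
    AdmConn σ τ bar a b ↔ ReflTransGen (AdmStep σ τ bar) a b := by
  constructor
  · rintro ⟨_ | ⟨c, l⟩, hhead, hlast, hchain⟩
    · simp at hhead
    · obtain rfl : c = a := by simpa using hhead
      exact List.relationReflTransGen_of_exists_isChain_cons l hchain
        (by simpa [List.getLast?_eq_some_getLast] using hlast)
  · intro h
    obtain ⟨l, hchain, hlast⟩ := List.exists_isChain_cons_of_relationReflTransGen h
    exact ⟨a :: l, rfl, by simp [List.getLast?_eq_some_getLast, hlast], hchain⟩

variable {σ τ bar}

theorem exists_reflTransGen_admStep_of_reflTransGen (hbar : ∀ e, τ (bar e) = σ e)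
    {S : Set E} (hS : ∀ s ∈ S, bar s ∈ S) {s₀ : E} (hs₀ : s₀ ∈ S) {v : V}
    (hv : ReflTransGen (fun a b => ∃ g, σ g = a ∧ τ g = b) (τ s₀) v) :
    ∃ s ∈ S, ∃ h, ReflTransGen (AdmStep σ τ bar) s h ∧ τ h = v := by
  induction hv with
  | refl => exact ⟨s₀, hs₀, s₀, .refl, rfl⟩
  | tail _ hstep ih =>
    obtain ⟨g, rfl, rfl⟩ := hstep
    obtain ⟨s, hs, h, hsh, hτh⟩ := ih
    by_cases hg : g = bar h
    · subst hg
      rcases hsh.cases_tail with rfl | ⟨c, hsc, hc, -⟩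
      · exact ⟨bar h, hS h hs, bar h, .refl, rfl⟩
      · exact ⟨s, hs, c, hsc, hc.trans (hbar h).symm⟩
    · exact ⟨s, hs, g, hsh.tail ⟨hτh, hg⟩, rfl⟩

theorem admConn_or_admConn_bar_of_tau_eq_sigma (hinv : ∀ e, bar (bar e) = e) {s h f : E}
    (hsh : ReflTransGen (AdmStep σ τ bar) s h) (hτ : τ h = σ f) :
    AdmConn σ τ bar s f ∨ AdmConn σ τ bar s (bar f) := by
  by_cases hf : f = bar h
  · right
    rwa [hf, hinv, admConn_iff_reflTransGen]
  · left
    exact (admConn_iff_reflTransGen σ τ bar).2 (hsh.tail ⟨hτ, hf⟩)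

end

theorem admissible_connection_up_to_conjugates_general
    {E V : Type*} (σ τ : E → V) (bar : E → E)
    (hinv : ∀ e, bar (bar e) = e)
    (hbar : ∀ e, τ (bar e) = σ e)
    (hconn : ∀ u v : V, Relation.ReflTransGen (fun a b => ∃ e, σ e = a ∧ τ e = b) u v)
    (e f : E) :
    AdmConn σ τ bar e f ∨ AdmConn σ τ bar e (bar f) ∨
    AdmConn σ τ bar (bar e) f ∨ AdmConn σ τ bar (bar e) (bar f) := by
  have hS : ∀ s ∈ ({e, bar e} : Set E), bar s ∈ ({e, bar e} : Set E) := by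
    rintro s (rfl | rfl) <;> simp [hinv]
  obtain ⟨s, hs, h, hsh, hτh⟩ :=
    exists_reflTransGen_admStep_of_reflTransGen hbar hS (Set.mem_insert e _) (hconn _ (σ f))
  have := admConn_or_admConn_bar_of_tau_eq_sigma hinv hsh hτh
  rcases hs with rfl | rfl <;> tauto

/-- Let `G` be a connected undirected graph and let `e, f` be edges
with `f ≠ e` and `f ≠ bar e`.  Then at least one of `e, bar e` is connected to at
least one of `f, bar f` by an admissible path in `G`. -/
theorem admissible_connection_up_to_conjugates
    {E V : Type*} (σ τ : E → V) (bar : E → E)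
    (hinv : ∀ e, bar (bar e) = e) (hne : ∀ e, bar e ≠ e)
    (hbar : ∀ e, τ (bar e) = σ e)
    (hconn : ∀ u v : V, Relation.ReflTransGen (fun a b => ∃ e, σ e = a ∧ τ e = b) u v)
    (e f : E) (hfe : f ≠ e) (hfbe : f ≠ bar e) :
    AdmConn σ τ bar e f ∨ AdmConn σ τ bar e (bar f) ∨
    AdmConn σ τ bar (bar e) f ∨ AdmConn σ τ bar (bar e) (bar f) :=
  admissible_connection_up_to_conjugates_general σ τ bar hinv hbar hconn e f
end

section
/- Let G be a connected undirected graph. Then the undirected graph U(\tilde{G}) obtained by symmetrizing the flow graph \tilde{G} has at most two connected components; if moreover G has a vertex of degree at least 3, then U(\tilde{G}) is connected. -/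
/-!
Reversal `e ↦ ē` maps flow edges to reversed flow edges, so it permutes the components of
`U(G̃)`; and two distinct edges `d ≠ d'` with the same terminus give the flow edge `d → d̄'`.
Walking along a path of `G` from `τ e` to `τ f`, the property "`f` lies in the component of `e`
or of `ē`" is therefore propagated from edge to edge, so every edge lies in the component of `e`
or of `ē`. Three distinct edges `d₁, d₂, d₃` into one vertex link `d₁ — d̄₂ — d₃ — d̄₁`, which
merges these two components.
-/

namespace FlowGraph

variable {E V : Type*} {σ τ : E → V} {bar : E → E}

/-- Adjacency in `U(G̃)`. -/
def SymmAdj (σ τ : E → V) (bar : E → E) (e f : E) : Prop :=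
  (τ e = σ f ∧ f ≠ bar e) ∨ (τ f = σ e ∧ e ≠ bar f)

abbrev SameComponent (σ τ : E → V) (bar : E → E) : E → E → Prop :=
  Relation.EqvGen (SymmAdj σ τ bar)

theorem sigma_bar (hinv : Function.Involutive bar) (hbar : ∀ e, τ (bar e) = σ e) (e : E) :
    σ (bar e) = τ e := by
  rw [← hbar, hinv]

theorem SymmAdj.map_bar (hinv : Function.Involutive bar) (hbar : ∀ e, τ (bar e) = σ e) {e f : E}
    (h : SymmAdj σ τ bar e f) : SymmAdj σ τ bar (bar e) (bar f) := by
  rcases h with ⟨h, hne⟩ | ⟨h, hne⟩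
  · refine Or.inr ⟨by rw [hbar, sigma_bar hinv hbar, h], ?_⟩
    rwa [hinv, ne_comm]
  · refine Or.inl ⟨by rw [hbar, sigma_bar hinv hbar, h], ?_⟩
    rwa [hinv, ne_comm]

theorem SameComponent.map_bar (hinv : Function.Involutive bar) (hbar : ∀ e, τ (bar e) = σ e)
    {e f : E} (h : SameComponent σ τ bar e f) : SameComponent σ τ bar (bar e) (bar f) := by
  induction h with
  | rel x y hxy => exact .rel _ _ (hxy.map_bar hinv hbar)
  | refl x => exact .refl _
  | symm x y _ ih => exact ih.symm
  | trans x y z _ _ ih₁ ih₂ => exact ih₁.trans _ _ _ ih₂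

theorem sameComponent_bar_of_tau_eq (hinv : Function.Involutive bar)
    (hbar : ∀ e, τ (bar e) = σ e) {d d' : E} (ht : τ d = τ d') (hd : d ≠ d') :
    SameComponent σ τ bar d (bar d') :=
  .rel _ _ <| Or.inl ⟨by rw [sigma_bar hinv hbar, ht], hinv.injective.ne hd.symm⟩

theorem sameComponent_or_bar_of_tau_eq (hinv : Function.Involutive bar)
    (hbar : ∀ e, τ (bar e) = σ e) {e f g : E} (ht : τ f = τ g)
    (h : SameComponent σ τ bar e f ∨ SameComponent σ τ bar e (bar f)) :
    SameComponent σ τ bar e g ∨ SameComponent σ τ bar e (bar g) := by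
  obtain rfl | hfg := eq_or_ne f g
  · exact h
  rcases h with h | h
  · exact .inr (h.trans _ _ _ (sameComponent_bar_of_tau_eq hinv hbar ht hfg))
  · exact .inl (h.trans _ _ _ (sameComponent_bar_of_tau_eq hinv hbar ht.symm hfg.symm).symm)

theorem sameComponent_or_bar (hinv : Function.Involutive bar) (hbar : ∀ e, τ (bar e) = σ e)
    (hconn : ∀ u v : V, Relation.ReflTransGen (fun a b => ∃ e, σ e = a ∧ τ e = b) u v)
    (e f : E) : SameComponent σ τ bar e f ∨ SameComponent σ τ bar e (bar f) := by
  have reach : ∀ v, Relation.ReflTransGen (fun a b => ∃ e, σ e = a ∧ τ e = b) (τ e) v →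
      ∃ d, τ d = v ∧ (SameComponent σ τ bar e d ∨ SameComponent σ τ bar e (bar d)) := by
    intro v hv
    induction hv with
    | refl => exact ⟨e, rfl, .inl (.refl _)⟩
    | tail _ hstep ih =>
      obtain ⟨d, rfl, hd⟩ := ih
      obtain ⟨g, hσg, rfl⟩ := hstep
      have hg := sameComponent_or_bar_of_tau_eq hinv hbar (by rw [hbar, hσg]) hd
      rw [hinv] at hg
      exact ⟨g, rfl, hg.symm⟩
  obtain ⟨d, hd, hed⟩ := reach (τ f) (hconn _ _)
  exact sameComponent_or_bar_of_tau_eq hinv hbar hd hed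

theorem sameComponent_of_sameComponent_bar_self (hinv : Function.Involutive bar)
    (hbar : ∀ e, τ (bar e) = σ e)
    (hconn : ∀ u v : V, Relation.ReflTransGen (fun a b => ∃ e, σ e = a ∧ τ e = b) u v)
    {d : E} (hd : SameComponent σ τ bar d (bar d)) (a b : E) : SameComponent σ τ bar a b := by
  have toD : ∀ x, SameComponent σ τ bar x d := fun x =>
    (sameComponent_or_bar hinv hbar hconn x d).elim id (·.trans _ _ _ hd.symm)
  exact (toD a).trans _ _ _ (toD b).symm

theorem sameComponent_bar_self_of_three_tau_eq (hinv : Function.Involutive bar)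
    (hbar : ∀ e, τ (bar e) = σ e) {d₁ d₂ d₃ : E} (h₂ : τ d₂ = τ d₁) (h₃ : τ d₃ = τ d₁)
    (h₁₂ : d₁ ≠ d₂) (h₁₃ : d₁ ≠ d₃) (h₂₃ : d₂ ≠ d₃) : SameComponent σ τ bar d₁ (bar d₁) :=
  ((sameComponent_bar_of_tau_eq hinv hbar h₂.symm h₁₂).trans _ _ _
    (sameComponent_bar_of_tau_eq hinv hbar (h₃.trans h₂.symm) h₂₃.symm).symm).trans _ _ _
    (sameComponent_bar_of_tau_eq hinv hbar h₃ h₁₃.symm)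

end FlowGraph

open FlowGraph in
theorem flow_graph_symmetrization_components_general
    {E V : Type*} [Fintype E] [DecidableEq V] (σ τ : E → V) (bar : E → E)
    (hinv : ∀ e, bar (bar e) = e)
    (hbar : ∀ e, τ (bar e) = σ e)
    (hconn : ∀ u v : V, Relation.ReflTransGen (fun a b => ∃ e, σ e = a ∧ τ e = b) u v) :
    (∀ a b c : E,
      Relation.EqvGen (fun e f => (τ e = σ f ∧ f ≠ bar e) ∨ (τ f = σ e ∧ e ≠ bar f)) a b ∨
      Relation.EqvGen (fun e f => (τ e = σ f ∧ f ≠ bar e) ∨ (τ f = σ e ∧ e ≠ bar f)) a c ∨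
      Relation.EqvGen (fun e f => (τ e = σ f ∧ f ≠ bar e) ∨ (τ f = σ e ∧ e ≠ bar f)) b c) ∧
    ((∃ v : V, 3 ≤ (Finset.univ.filter fun e => τ e = v).card) →
      ∀ a b : E,
        Relation.EqvGen (fun e f => (τ e = σ f ∧ f ≠ bar e) ∨ (τ f = σ e ∧ e ≠ bar f)) a b) := by
  refine ⟨fun a b c => ?_, fun ⟨v, hv⟩ => ?_⟩
  · rcases sameComponent_or_bar hinv hbar hconn a b with hab | hab
    · exact .inl hab
    rcases sameComponent_or_bar hinv hbar hconn a c with hac | hac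
    · exact .inr (.inl hac)
    have hbc := SameComponent.map_bar hinv hbar (hab.symm.trans _ _ _ hac)
    rw [hinv, hinv] at hbc
    exact .inr (.inr hbc)
  · obtain ⟨d₁, hd₁, d₂, hd₂, d₃, hd₃, h₁₂, h₁₃, h₂₃⟩ := Finset.two_lt_card.mp hv
    simp only [Finset.mem_filter, Finset.mem_univ, true_and] at hd₁ hd₂ hd₃
    exact sameComponent_of_sameComponent_bar_self hinv hbar hconn
      (sameComponent_bar_self_of_three_tau_eq hinv hbar (hd₂.trans hd₁.symm)
        (hd₃.trans hd₁.symm) h₁₂ h₁₃ h₂₃)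

/-- Let `G` be a connected undirected graph.  The undirected graph
`U(G̃)` obtained by symmetrizing the flow graph `G̃` (vertex set: the edges of
`G`; adjacency: `e ~ f` iff `(e,f)` or `(f,e)` is a flow edge) has at most two
connected components — i.e. among any three vertices of `U(G̃)`, two lie in the
same component.  If moreover `G` has a vertex of degree at least 3 (degree = the
number of edges with terminus that vertex), then `U(G̃)` is connected. -/
theorem flow_graph_symmetrization_components
    {E V : Type*} [Fintype E] [DecidableEq V] (σ τ : E → V) (bar : E → E)
    (hinv : ∀ e, bar (bar e) = e) (hne : ∀ e, bar e ≠ e)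
    (hbar : ∀ e, τ (bar e) = σ e)
    (hconn : ∀ u v : V, Relation.ReflTransGen (fun a b => ∃ e, σ e = a ∧ τ e = b) u v) :
    (∀ a b c : E,
      Relation.EqvGen (fun e f => (τ e = σ f ∧ f ≠ bar e) ∨ (τ f = σ e ∧ e ≠ bar f)) a b ∨
      Relation.EqvGen (fun e f => (τ e = σ f ∧ f ≠ bar e) ∨ (τ f = σ e ∧ e ≠ bar f)) a c ∨
      Relation.EqvGen (fun e f => (τ e = σ f ∧ f ≠ bar e) ∨ (τ f = σ e ∧ e ≠ bar f)) b c) ∧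
    ((∃ v : V, 3 ≤ (Finset.univ.filter fun e => τ e = v).card) →
      ∀ a b : E,
        Relation.EqvGen (fun e f => (τ e = σ f ∧ f ≠ bar e) ∨ (τ f = σ e ∧ e ≠ bar f)) a b) :=
  flow_graph_symmetrization_components_general σ τ bar hinv hbar hconn
end

section
/- Let G be a connected undirected graph in which every vertex has degree ≥ 2 and some vertex has degree ≥ 3. Then every edge of G is connected via an admissible path (possibly empty) to an admissible cycle, such that neither the path nor its conjugate shares an edge with the cycle. -/
/-!
Every vertex has at least two incoming edges, so every admissible walk can be extended by one
more admissible step. Extend the walk starting with `e` until the new edge `x` is an edge `y`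
already traversed, in one of the two orientations. If `x = y`, the walk from `y` on is an
admissible cycle and the part before `y` is the path. If `x = bar y`, the walk has come back to
`τ y` along the conjugate of `y`, so the conjugate of the part after `y` is an admissible cycle
at `τ y`, and the walk up to `y` is the path. Since no edge was repeated before, in either
orientation, the path and its conjugate avoid the cycle.
-/

namespace SerreGraph

variable {E V : Type*} (σ τ : E → V) (bar : E → E)

def AdmissibleStep (a b : E) : Prop := τ a = σ b ∧ b ≠ bar a

def SameEdge (a b : E) : Prop := b = a ∨ b = bar a

def conjPath (P : List E) : List E := (P.map bar).reverse

def IsLollipop (e : E) (P C : List E) : Prop :=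
  C ≠ [] ∧ C.IsChain (AdmissibleStep σ τ bar) ∧
    (∀ a b, C.getLast? = some a → C.head? = some b → τ a = σ b) ∧
    ((P = [] ∧ e ∈ C) ∨
      (P.head? = some e ∧ P.IsChain (AdmissibleStep σ τ bar) ∧
        ∀ a b, P.getLast? = some a → C.head? = some b → AdmissibleStep σ τ bar a b)) ∧
    ∀ x ∈ P, x ∉ C ∧ bar x ∉ C

variable {σ τ bar}

theorem sigma_bar (hinv : Function.Involutive bar) (hbar : ∀ a, τ (bar a) = σ a) (a : E) :
    σ (bar a) = τ a := by
  rw [← hbar, hinv]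

theorem admissibleStep_bar_bar (hinv : Function.Involutive bar) (hbar : ∀ a, τ (bar a) = σ a)
    {a b : E} : AdmissibleStep σ τ bar (bar b) (bar a) ↔ AdmissibleStep σ τ bar a b := by
  rw [AdmissibleStep, AdmissibleStep, hbar, sigma_bar hinv hbar, hinv b, eq_comm, ne_comm]

theorem mem_conjPath (hinv : Function.Involutive bar) {a : E} {P : List E} :
    a ∈ conjPath bar P ↔ bar a ∈ P := by
  rw [conjPath, List.mem_reverse, List.mem_map_of_involutive hinv]

theorem head?_conjPath (P : List E) : (conjPath bar P).head? = P.getLast?.map bar := by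
  rw [conjPath, List.head?_reverse, List.getLast?_map]

theorem getLast?_conjPath (P : List E) : (conjPath bar P).getLast? = P.head?.map bar := by
  rw [conjPath, List.getLast?_reverse, List.head?_map]

theorem isChain_conjPath (hinv : Function.Involutive bar) (hbar : ∀ a, τ (bar a) = σ a)
    {P : List E} (hP : P.IsChain (AdmissibleStep σ τ bar)) :
    (conjPath bar P).IsChain (AdmissibleStep σ τ bar) := by
  rw [conjPath, List.isChain_reverse, List.isChain_map]
  exact hP.imp fun _ _ h => (admissibleStep_bar_bar hinv hbar).2 h

theorem exists_admissibleStep [Fintype E] [DecidableEq V] (hinv : Function.Involutive bar)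
    (hbar : ∀ a, τ (bar a) = σ a) {a : E}
    (hdeg : 2 ≤ (Finset.univ.filter fun f => τ f = τ a).card) :
    ∃ b, AdmissibleStep σ τ bar a b := by
  obtain ⟨c, hc, hca⟩ := Finset.exists_mem_ne hdeg a
  refine ⟨bar c, ?_, hinv.injective.ne hca⟩
  rw [sigma_bar hinv hbar, (Finset.mem_filter.1 hc).2]

theorem isLollipop_of_append {e : E} {P C : List E} (hC : C ≠ [])
    (hhead : (P ++ C).head? = some e) (hchain : (P ++ C).IsChain (AdmissibleStep σ τ bar))
    (hclosed : ∀ a b, C.getLast? = some a → C.head? = some b → τ a = σ b)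
    (hdisj : ∀ p ∈ P, ∀ c ∈ C, ¬SameEdge bar p c) : IsLollipop σ τ bar e P C := by
  obtain ⟨hP, hC', hjoin⟩ := List.isChain_append.1 hchain
  refine ⟨hC, hC', hclosed, ?_, fun p hp =>
    ⟨fun h => hdisj p hp p h (Or.inl rfl), fun h => hdisj p hp _ h (Or.inr rfl)⟩⟩
  cases P with
  | nil => exact Or.inl ⟨rfl, List.mem_of_mem_head? hhead⟩
  | cons p P => exact Or.inr ⟨hhead, hP, fun a b ha hb => hjoin a ha b hb⟩

theorem exists_isLollipop_of_mem {W : List E} {e x : E} (hhead : W.head? = some e)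
    (hW : W.IsChain (AdmissibleStep σ τ bar)) (hWpw : W.Pairwise fun a b => ¬SameEdge bar a b)
    (hx : ∀ a ∈ W.getLast?, AdmissibleStep σ τ bar a x) (hmem : x ∈ W) :
    ∃ P C, IsLollipop σ τ bar e P C := by
  obtain ⟨P, D, rfl⟩ := List.append_of_mem hmem
  refine ⟨P, x :: D, isLollipop_of_append (List.cons_ne_nil _ _) hhead hW ?_
    (List.pairwise_append.1 hWpw).2.2⟩
  rintro a b ha ⟨⟩
  rw [← List.getLast?_append_of_ne_nil P (List.cons_ne_nil x D)] at ha
  exact (hx a ha).1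

theorem exists_isLollipop_of_bar_mem (hinv : Function.Involutive bar)
    (hbar : ∀ a, τ (bar a) = σ a) {W : List E} {e y : E} (hhead : W.head? = some e)
    (hW : W.IsChain (AdmissibleStep σ τ bar)) (hWpw : W.Pairwise fun a b => ¬SameEdge bar a b)
    (hx : ∀ a ∈ W.getLast?, AdmissibleStep σ τ bar a (bar y)) (hy : y ∈ W) :
    ∃ P C, IsLollipop σ τ bar e P C := by
  obtain ⟨P, D, rfl⟩ := List.append_of_mem hy
  rw [← List.singleton_append, ← List.append_assoc] at hhead hW hWpw hx
  obtain ⟨hPy, hD, hjoin⟩ := List.isChain_append.1 hW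
  have hsep := (List.pairwise_append.1 hWpw).2.2
  have hlast : (P ++ [y]).getLast? = some y := List.getLast?_concat
  obtain ⟨z, hz⟩ : ∃ z, D.getLast? = some z := by
    cases D with
    | nil => exact absurd rfl (hx y (by simp)).2
    | cons d D => exact ⟨_, List.getLast?_cons⟩
  have hDne : D ≠ [] := by rintro rfl; simp at hz
  have hzD : z ∈ D := List.mem_of_getLast? hz
  have hzy : τ z = τ y := by
    rw [← sigma_bar hinv hbar y]
    exact (hx z (by rw [List.getLast?_append_of_ne_nil _ hDne]; exact hz)).1
  refine ⟨P ++ [y], conjPath bar D, isLollipop_of_append ?_ ?_ ?_ ?_ ?_⟩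
  · simpa [conjPath] using hDne
  · simpa [List.head?_append] using hhead
  · refine hPy.append (isChain_conjPath hinv hbar hD) ?_
    rintro a ha b hb
    rw [hlast, Option.mem_def, Option.some_inj] at ha
    rw [head?_conjPath, hz, Option.mem_def, Option.map_some, Option.some_inj] at hb
    subst ha hb
    refine ⟨by rw [sigma_bar hinv hbar, hzy], hinv.injective.ne fun h => ?_⟩
    exact hsep _ (by simp) _ hzD (Or.inl h)
  · intro a b ha hb
    rw [getLast?_conjPath, Option.map_eq_some_iff] at ha
    rw [head?_conjPath, hz, Option.map_some, Option.some_inj] at hb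
    obtain ⟨d, hd, rfl⟩ := ha
    subst hb
    rw [hbar, sigma_bar hinv hbar, hzy]
    exact ((hjoin y hlast d hd).1).symm
  · intro p hp c hc hpc
    rw [mem_conjPath hinv] at hc
    refine hsep p hp _ hc ?_
    rcases hpc with rfl | rfl
    · exact Or.inr rfl
    · exact Or.inl (hinv p)

theorem exists_isLollipop_of_walk [Fintype E] (hinv : Function.Involutive bar)
    (hbar : ∀ a, τ (bar a) = σ a) (hstep : ∀ a, ∃ b, AdmissibleStep σ τ bar a b) {e : E}
    (W : List E) (hhead : W.head? = some e) (hW : W.IsChain (AdmissibleStep σ τ bar))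
    (hWpw : W.Pairwise fun a b => ¬SameEdge bar a b) : ∃ P C, IsLollipop σ τ bar e P C := by
  obtain ⟨a, ha⟩ : ∃ a, W.getLast? = some a := Option.ne_none_iff_exists'.1 <| by
    rw [Ne, List.getLast?_eq_none_iff, ← List.head?_eq_none_iff, hhead]
    exact Option.some_ne_none e
  obtain ⟨x, hx⟩ := hstep a
  have hx' : ∀ a' ∈ W.getLast?, AdmissibleStep σ τ bar a' x := by
    rintro a' ha'
    rw [ha, Option.mem_def, Option.some_inj] at ha'
    exact ha' ▸ hx
  by_cases hfresh : ∀ y ∈ W, ¬SameEdge bar y x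
  · have hWx : (W ++ [x]).Pairwise fun a b => ¬SameEdge bar a b :=
      List.pairwise_append.2 ⟨hWpw, List.pairwise_singleton _ _,
        fun y hy _ hz => List.eq_of_mem_singleton hz ▸ hfresh y hy⟩
    have hlen : (W ++ [x]).length ≤ Fintype.card E :=
      List.Nodup.length_le_card (hWx.imp fun h hab => h (Or.inl hab.symm))
    exact exists_isLollipop_of_walk hinv hbar hstep (W ++ [x]) (by simp [List.head?_append, hhead])
      (hW.append (List.isChain_singleton x) (by simpa using hx')) hWx
  · push Not at hfresh
    obtain ⟨y, hy, rfl | rfl⟩ := hfresh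
    · exact exists_isLollipop_of_mem hhead hW hWpw hx' hy
    · exact exists_isLollipop_of_bar_mem hinv hbar hhead hW hWpw hx' hy
termination_by Fintype.card E - W.length
decreasing_by
  simp only [List.length_append, List.length_singleton] at hlen ⊢
  omega

end SerreGraph

theorem edge_connected_to_admissible_cycle_general
    {E V : Type*} [Fintype E] [DecidableEq V] (σ τ : E → V) (bar : E → E)
    (hinv : ∀ e, bar (bar e) = e)
    (hbar : ∀ e, τ (bar e) = σ e)
    (hdeg2 : ∀ v : V, 2 ≤ (Finset.univ.filter fun f => τ f = v).card)
    (e : E) :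
    ∃ P C : List E,
      C ≠ [] ∧
      C.Chain' (fun a b => τ a = σ b ∧ b ≠ bar a) ∧
      (∀ a b, C.getLast? = some a → C.head? = some b → τ a = σ b) ∧
      ((P = [] ∧ e ∈ C) ∨
        (P.head? = some e ∧
         P.Chain' (fun a b => τ a = σ b ∧ b ≠ bar a) ∧
         (∀ a b, P.getLast? = some a → C.head? = some b → τ a = σ b ∧ b ≠ bar a))) ∧
      (∀ x ∈ P, x ∉ C ∧ bar x ∉ C) :=
  SerreGraph.exists_isLollipop_of_walk hinv hbar
    (fun _ => SerreGraph.exists_admissibleStep hinv hbar (hdeg2 _)) [e] rfl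
    (List.isChain_singleton e) (List.pairwise_singleton _ e)

/-- Let `G` be a connected undirected graph in which every vertex
has degree ≥ 2 and some vertex has degree ≥ 3.  Then every edge `e` of `G` is
connected via an admissible path `P` (possibly empty) to an admissible cycle `C`
(a nonempty admissible path with `τ(last) = σ(head)`), in such a way that if `P`
is empty then `e` lies on `C`, if `P` is nonempty then `P` starts with `e` and
joins `C` admissibly, and neither `P` nor its conjugate shares an edge with `C`. -/
theorem edge_connected_to_admissible_cycle
    {E V : Type*} [Fintype E] [DecidableEq V] (σ τ : E → V) (bar : E → E)
    (hinv : ∀ e, bar (bar e) = e) (hne : ∀ e, bar e ≠ e)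
    (hbar : ∀ e, τ (bar e) = σ e)
    (hconn : ∀ u v : V, Relation.ReflTransGen (fun a b => ∃ e, σ e = a ∧ τ e = b) u v)
    (hdeg2 : ∀ v : V, 2 ≤ (Finset.univ.filter fun f => τ f = v).card)
    (hdeg3 : ∃ v : V, 3 ≤ (Finset.univ.filter fun f => τ f = v).card)
    (e : E) :
    ∃ P C : List E,
      C ≠ [] ∧
      C.Chain' (fun a b => τ a = σ b ∧ b ≠ bar a) ∧
      (∀ a b, C.getLast? = some a → C.head? = some b → τ a = σ b) ∧
      ((P = [] ∧ e ∈ C) ∨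
        (P.head? = some e ∧
         P.Chain' (fun a b => τ a = σ b ∧ b ≠ bar a) ∧
         (∀ a b, P.getLast? = some a → C.head? = some b → τ a = σ b ∧ b ≠ bar a))) ∧
      (∀ x ∈ P, x ∉ C ∧ bar x ∉ C) :=
  edge_connected_to_admissible_cycle_general σ τ bar hinv hbar hdeg2 e
end

section
/- Let G be a connected undirected graph in which every vertex has degree ≥ 2 and some vertex has degree ≥ 3. Then for any two edges e, f of G, there is an admissible path from e to f; consequently the flow graph \tilde{G} is strongly connected. -/
open Relation Finset

namespace Relation

theorem exists_reflTransGen_terminal {α : Type*} [Finite α] (r : α → α → Prop) (a : α) :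
    ∃ d, ReflTransGen r a d ∧ ∀ x, ReflTransGen r d x → ReflTransGen r x d := by
  classical
  have := Fintype.ofFinite α
  let reach (x : α) : Finset α := {y | ReflTransGen r x y}
  obtain ⟨d, had, hmin⟩ := exists_min_image (reach a) (fun x => #(reach x))
    ⟨a, by simp [reach, ReflTransGen.refl]⟩
  simp only [reach, mem_filter_univ] at had
  refine ⟨d, had, fun x hdx => ?_⟩
  have hsub : reach x ⊆ reach d := fun y hy => by
    simp only [reach, mem_filter_univ] at hy ⊢
    exact hdx.trans hy
  have hreach := eq_of_subset_of_card_le hsub (hmin x (by simpa [reach] using had.trans hdx))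
  have hd : d ∈ reach x := hreach ▸ by simp [reach, ReflTransGen.refl]
  simpa [reach] using hd

theorem exists_reflTransGen_rel_of_terminal {α : Type*} {r : α → α → Prop}
    (hsucc : ∀ a, ∃ b, r a b) {a b : α} (ha : ∀ x, ReflTransGen r a x → ReflTransGen r x a)
    (hab : ReflTransGen r a b) : ∃ c, ReflTransGen r a c ∧ r c b := by
  obtain ⟨c, hbc⟩ := hsucc b
  have hcb : ReflTransGen r c b := (ha c (hab.tail hbc)).trans hab
  obtain ⟨d, hbd, hdb⟩ := TransGen.tail'_iff.mp (TransGen.head' hbc hcb)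
  exact ⟨d, hab.trans hbd, hdb⟩

end Relation

section FlowGraph

variable {E V : Type*}

def FlowAdj (σ τ : E → V) (bar : E → E) (a b : E) : Prop :=
  τ a = σ b ∧ b ≠ bar a

structure IsEdgeConjugation (σ τ : E → V) (bar : E → E) : Prop where
  bar_bar : ∀ e, bar (bar e) = e
  τ_bar : ∀ e, τ (bar e) = σ e

variable {σ τ : E → V} {bar : E → E}

namespace IsEdgeConjugation

variable (hG : IsEdgeConjugation σ τ bar)
include hG

theorem σ_bar (e : E) : σ (bar e) = τ e := by
  rw [← hG.τ_bar, hG.bar_bar]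

theorem injective : Function.Injective bar :=
  Function.LeftInverse.injective hG.bar_bar

theorem flowAdj_bar {a b : E} (h : FlowAdj σ τ bar a b) : FlowAdj σ τ bar (bar b) (bar a) :=
  ⟨by rw [hG.τ_bar, hG.σ_bar, h.1], by rw [hG.bar_bar]; exact h.2.symm⟩

theorem reflTransGen_flowAdj_bar {a b : E} (h : ReflTransGen (FlowAdj σ τ bar) a b) :
    ReflTransGen (FlowAdj σ τ bar) (bar b) (bar a) := by
  induction h with
  | refl => exact .refl
  | tail _ hbc ih => exact .head (hG.flowAdj_bar hbc) ih

theorem card_filter_σ_eq [Fintype E] [DecidableEq V] (v : V) :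
    #{e | σ e = v} = #{e | τ e = v} :=
  card_nbij' bar bar (fun e he => by simp_all [hG.τ_bar]) (fun e he => by simp_all [hG.σ_bar])
    (fun e _ => hG.bar_bar e) (fun e _ => hG.bar_bar e)

theorem exists_flowAdj [Fintype E] [DecidableEq V] (hdeg2 : ∀ v, 2 ≤ #{f | τ f = v}) (e : E) :
    ∃ f, FlowAdj σ τ bar e f := by
  obtain ⟨x, hx, hxe⟩ := exists_mem_ne (hdeg2 (τ e)) e
  exact ⟨bar x, by rw [hG.σ_bar, (mem_filter_univ x).mp hx], fun h => hxe (hG.injective h)⟩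

/-- A terminal class of the flow graph meets every vertex: walking along a path of `G`, the only
edge that cannot be followed directly is the reverse of the current one, and then the
predecessor in the terminal class already ends at the next vertex. -/
theorem exists_τ_eq_of_terminal [Fintype E] [DecidableEq V]
    (hconn : ∀ u v : V, ReflTransGen (fun a b => ∃ e, σ e = a ∧ τ e = b) u v)
    (hdeg2 : ∀ v, 2 ≤ #{f | τ f = v}) {d₀ : E}
    (hd₀ : ∀ x, ReflTransGen (FlowAdj σ τ bar) d₀ x → ReflTransGen (FlowAdj σ τ bar) x d₀)
    (v : V) : ∃ d, ReflTransGen (FlowAdj σ τ bar) d₀ d ∧ τ d = v := by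
  induction hconn (τ d₀) v with
  | refl => exact ⟨d₀, .refl, rfl⟩
  | tail _ huv ih =>
    obtain ⟨d, hd, rfl⟩ := ih
    obtain ⟨g, hgd, rfl⟩ := huv
    by_cases hg : g = bar d
    · obtain ⟨c, hc, hcd⟩ :=
        exists_reflTransGen_rel_of_terminal (hG.exists_flowAdj hdeg2) hd₀ hd
      exact ⟨c, hc, by rw [hcd.1, hg, hG.τ_bar]⟩
    · exact ⟨g, hd.tail ⟨hgd.symm, hg⟩, rfl⟩

theorem filter_τ_eq_singleton [DecidableEq V] {F : Finset E}
    (hclosed : ∀ a ∈ F, ∀ b, FlowAdj σ τ bar a b → b ∈ F) (hanti : ∀ a ∈ F, bar a ∉ F)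
    {y : E} (hy : y ∈ F) : F.filter (τ · = τ y) = {y} := by
  refine eq_singleton_iff_unique_mem.mpr ⟨mem_filter.mpr ⟨hy, rfl⟩, fun x hx => ?_⟩
  obtain ⟨hx, hxy⟩ := mem_filter.mp hx
  by_contra hne
  exact hanti x hx (hclosed y hy (bar x) ⟨by rw [hG.σ_bar, hxy], hG.injective.ne hne⟩)

end IsEdgeConjugation

theorem filter_σ_eq_erase [Fintype E] [DecidableEq E] [DecidableEq V] {F : Finset E}
    (hclosed : ∀ a ∈ F, ∀ b, FlowAdj σ τ bar a b → b ∈ F) (hanti : ∀ a ∈ F, bar a ∉ F)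
    {y : E} (hy : y ∈ F) : F.filter (σ · = τ y) = ({e | σ e = τ y} : Finset E).erase (bar y) := by
  ext g
  simp only [mem_filter, mem_erase, mem_univ, true_and]
  constructor
  · rintro ⟨hg, hgy⟩
    exact ⟨fun h => hanti y hy (h ▸ hg), hgy⟩
  · rintro ⟨hne, hgy⟩
    exact ⟨hclosed y hy g ⟨hgy.symm, hne⟩, hgy⟩

theorem IsEdgeConjugation.card_filter_τ_eq_two [Fintype E] [Fintype V] [DecidableEq V]
    (hG : IsEdgeConjugation σ τ bar) {F : Finset E}
    (hclosed : ∀ a ∈ F, ∀ b, FlowAdj σ τ bar a b → b ∈ F) (hanti : ∀ a ∈ F, bar a ∉ F)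
    (hcover : ∀ v, ∃ a ∈ F, τ a = v) (hdeg2 : ∀ v, 2 ≤ #{f | τ f = v}) (v : V) :
    #{f | τ f = v} = 2 := by
  classical
  choose y hyF hyv using hcover
  have hin : ∀ v, #(F.filter (τ · = v)) = 1 := fun v => by
    rw [← hyv v, hG.filter_τ_eq_singleton hclosed hanti (hyF v), card_singleton]
  have hout : ∀ v, #(F.filter (σ · = v)) = #{f | τ f = v} - 1 := fun v => by
    have hbar : bar (y v) ∈ ({e | σ e = τ (y v)} : Finset E) := by simp [hG.σ_bar]
    rw [← hyv v, filter_σ_eq_erase hclosed hanti (hyF v), card_erase_of_mem hbar,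
      hG.card_filter_σ_eq]
  have hsum : ∑ v, #(F.filter (τ · = v)) = ∑ v, #(F.filter (σ · = v)) := by
    rw [← card_eq_sum_card_fiberwise (by simp), ← card_eq_sum_card_fiberwise (by simp)]
  have hle : ∀ v ∈ univ, #(F.filter (τ · = v)) ≤ #(F.filter (σ · = v)) := fun v _ => by
    have := hdeg2 v
    rw [hin, hout]
    omega
  have heq := (sum_eq_sum_iff_of_le hle).mp hsum v (mem_univ v)
  rw [hin, hout] at heq
  have := hdeg2 v
  omega

theorem IsEdgeConjugation.reflTransGen_flowAdj_bar_self [Fintype E] [DecidableEq V]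
    (hG : IsEdgeConjugation σ τ bar)
    (hconn : ∀ u v : V, ReflTransGen (fun a b => ∃ e, σ e = a ∧ τ e = b) u v)
    (hdeg2 : ∀ v, 2 ≤ #{f | τ f = v}) (hdeg3 : ∃ v, 3 ≤ #{f | τ f = v}) (e : E) :
    ReflTransGen (FlowAdj σ τ bar) e (bar e) := by
  classical
  obtain ⟨d₀, hed₀, hd₀⟩ := exists_reflTransGen_terminal (FlowAdj σ τ bar) e
  have hcover := hG.exists_τ_eq_of_terminal hconn hdeg2 hd₀
  suffices ∃ x, ReflTransGen (FlowAdj σ τ bar) d₀ x ∧ ReflTransGen (FlowAdj σ τ bar) d₀ (bar x) by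
    obtain ⟨x, hx, hbx⟩ := this
    exact (hed₀.trans hbx).trans (hG.reflTransGen_flowAdj_bar (hed₀.trans hx))
  by_contra! hanti
  have : Finite V := .of_surjective τ fun v => (hcover v).imp fun _ => And.right
  have := Fintype.ofFinite V
  obtain ⟨w, hw⟩ := hdeg3
  have := hG.card_filter_τ_eq_two (F := {x | ReflTransGen (FlowAdj σ τ bar) d₀ x})
    (by simpa using fun a ha b hab => ha.tail hab) (by simpa using hanti)
    (by simpa using hcover) hdeg2 w
  omega

theorem reflTransGen_flowAdj_of_bar_self
    (hconn : ∀ u v : V, ReflTransGen (fun a b => ∃ e, σ e = a ∧ τ e = b) u v)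
    (hbar : ∀ e, ReflTransGen (FlowAdj σ τ bar) e (bar e)) (e f : E) :
    ReflTransGen (FlowAdj σ τ bar) e f := by
  have hnext : ∀ a b, σ b = τ a → ReflTransGen (FlowAdj σ τ bar) a b := fun a b hab => by
    by_cases hb : b = bar a
    · exact hb ▸ hbar a
    · exact .single ⟨hab.symm, hb⟩
  suffices ∀ v, ReflTransGen (fun a b => ∃ e, σ e = a ∧ τ e = b) (τ e) v →
      ∀ g, σ g = v → ReflTransGen (FlowAdj σ τ bar) e g from this _ (hconn _ _) f rfl
  intro v hv
  induction hv with
  | refl => exact hnext e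
  | tail _ huv ih =>
    obtain ⟨k, hk, rfl⟩ := huv
    exact fun g hg => (ih k hk).trans (hnext k g hg)

theorem admConn_of_reflTransGen {e f : E}
    (h : ReflTransGen (FlowAdj σ τ bar) e f) : AdmConn σ τ bar e f := by
  obtain ⟨l, hl, hlast⟩ := List.exists_isChain_cons_of_relationReflTransGen h
  exact ⟨e :: l, rfl, by rw [List.getLast?_eq_some_getLast (List.cons_ne_nil e l), hlast], hl⟩

end FlowGraph

theorem flow_graph_strongly_connected_general
    {E V : Type*} [Fintype E] [DecidableEq V] (σ τ : E → V) (bar : E → E)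
    (hinv : ∀ e, bar (bar e) = e)
    (hbar : ∀ e, τ (bar e) = σ e)
    (hconn : ∀ u v : V, Relation.ReflTransGen (fun a b => ∃ e, σ e = a ∧ τ e = b) u v)
    (hdeg2 : ∀ v : V, 2 ≤ (Finset.univ.filter fun f => τ f = v).card)
    (hdeg3 : ∃ v : V, 3 ≤ (Finset.univ.filter fun f => τ f = v).card) :
    (∀ e f : E, AdmConn σ τ bar e f) ∧
    (∀ e f : E, Relation.ReflTransGen (fun a b => τ a = σ b ∧ b ≠ bar a) e f) := by
  have hG : IsEdgeConjugation σ τ bar := ⟨hinv, hbar⟩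
  have hflow : ∀ e f, ReflTransGen (FlowAdj σ τ bar) e f :=
    reflTransGen_flowAdj_of_bar_self hconn (hG.reflTransGen_flowAdj_bar_self hconn hdeg2 hdeg3)
  exact ⟨fun e f => admConn_of_reflTransGen (hflow e f), hflow⟩

/-- Let `G` be a connected undirected graph in which every vertex
has degree ≥ 2 and some vertex has degree ≥ 3.  Then for any two edges `e, f`
there is an admissible path from `e` to `f`; consequently the flow graph `G̃`
(vertices: edges of `G`; directed edges `(a,b)` with `τ a = σ b`, `b ≠ bar a`)
is strongly connected. -/
theorem flow_graph_strongly_connected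
    {E V : Type*} [Fintype E] [DecidableEq V] (σ τ : E → V) (bar : E → E)
    (hinv : ∀ e, bar (bar e) = e) (hne : ∀ e, bar e ≠ e)
    (hbar : ∀ e, τ (bar e) = σ e)
    (hconn : ∀ u v : V, Relation.ReflTransGen (fun a b => ∃ e, σ e = a ∧ τ e = b) u v)
    (hdeg2 : ∀ v : V, 2 ≤ (Finset.univ.filter fun f => τ f = v).card)
    (hdeg3 : ∃ v : V, 3 ≤ (Finset.univ.filter fun f => τ f = v).card) :
    (∀ e f : E, AdmConn σ τ bar e f) ∧
    (∀ e f : E, Relation.ReflTransGen (fun a b => τ a = σ b ∧ b ≠ bar a) e f) :=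
  flow_graph_strongly_connected_general σ τ bar hinv hbar hconn hdeg2 hdeg3
end

section
/- Let B be a bipartite graph, connected, with all check nodes of degree 2, all bit nodes of degree ≥ 2, and some bit node of degree ≥ 3, and suppose the flow matrix K is primitive with Perron eigenvalue ρ, right Perron vector z and left Perron vector y* with y*z = 1. Set c = y*Λ. Then for every edge e, lim_{t→∞} (x_e^{(t)})^{(ρ−1)/(ρ^t−1)} = (u^c)^{z_e}; consequently x_e^{(t)} → 0 for all e when u^c < 1 and x_e^{(t)} → ∞ for all e when u^c > 1. -/
/-!
Write `v e = log u (lam e)`, so that `log x⁽ᵗ⁾ = ∑_{i<t} Kⁱ v`. Conjugating `Kⁿ / ρⁿ` by the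
Perron vector `z` gives row-stochastic matrices (Doob transforms); the one for a positive
power `Kʳ` has all entries `≥ ε > 0`, so it shrinks the oscillation of `Kᵗ v / (ρᵗ z)` by the
factor `1 - 2ε`, while the `(y z)`-weighted mean of that vector stays equal to `y v`. Hence
`Kᵗ v / ρᵗ → (y v) z`, and averaging against the geometric weights `ρⁱ` gives the limit of
`(ρ - 1) / (ρᵗ - 1) · log x⁽ᵗ⁾`. Here `ρ > 1` because the row sums of `K` are the bit-node
degrees minus one: all `≥ 1`, and `≥ 2` at a node of degree three.
-/

open Filter Finset Matrix Topology

section Oscillation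

variable {E : Type*} [Fintype E]

noncomputable def osc (w : E → ℝ) : ℝ := (⨆ e, w e) - ⨅ e, w e

variable [Nonempty E] {p w : E → ℝ} {ε : ℝ}

lemma osc_nonneg (w : E → ℝ) : 0 ≤ osc w := by
  obtain ⟨e⟩ := ‹Nonempty E›
  exact sub_nonneg.2 ((ciInf_le (Finite.bddBelow_range w) e).trans
    (le_ciSup (Finite.bddAbove_range w) e))

lemma dotProduct_le_iSup_sub (hε0 : 0 ≤ ε) (hε : ∀ f, ε ≤ p f) (hp : ∑ f, p f = 1) :
    p ⬝ᵥ w ≤ (⨆ f, w f) - ε * osc w := by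
  obtain ⟨f₀, hf₀⟩ := exists_eq_ciInf_of_finite (f := w)
  have hle : ∀ f, w f ≤ ⨆ f, w f := le_ciSup (Finite.bddAbove_range w)
  have hsingle : p f₀ * ((⨆ f, w f) - w f₀) ≤ ∑ f, p f * ((⨆ f, w f) - w f) :=
    single_le_sum (f := fun f => p f * ((⨆ f, w f) - w f))
      (fun f _ => mul_nonneg (hε0.trans (hε f)) (sub_nonneg.2 (hle f))) (mem_univ f₀)
  have hsum : ∑ f, p f * ((⨆ f, w f) - w f) = (⨆ f, w f) - ∑ f, p f * w f := by
    simp only [mul_sub, sum_sub_distrib, ← sum_mul, hp, one_mul]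
  rw [osc, dotProduct, ← hf₀]
  nlinarith [hε f₀, sub_nonneg.2 (hle f₀)]

lemma iInf_add_le_dotProduct (hε0 : 0 ≤ ε) (hε : ∀ f, ε ≤ p f) (hp : ∑ f, p f = 1) :
    (⨅ f, w f) + ε * osc w ≤ p ⬝ᵥ w := by
  obtain ⟨f₁, hf₁⟩ := exists_eq_ciSup_of_finite (f := w)
  have hle : ∀ f, ⨅ f, w f ≤ w f := ciInf_le (Finite.bddBelow_range w)
  have hsingle : p f₁ * (w f₁ - ⨅ f, w f) ≤ ∑ f, p f * (w f - ⨅ f, w f) :=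
    single_le_sum (f := fun f => p f * (w f - ⨅ f, w f))
      (fun f _ => mul_nonneg (hε0.trans (hε f)) (sub_nonneg.2 (hle f))) (mem_univ f₁)
  have hsum : ∑ f, p f * (w f - ⨅ f, w f) = ∑ f, p f * w f - ⨅ f, w f := by
    simp only [mul_sub, sum_sub_distrib, ← sum_mul, hp, one_mul]
  rw [osc, dotProduct, ← hf₁]
  nlinarith [hε f₁, sub_nonneg.2 (hle f₁)]

lemma osc_mulVec_le {P : Matrix E E ℝ} (hε0 : 0 ≤ ε) (hε : ∀ e f, ε ≤ P e f)
    (hP : ∀ e, ∑ f, P e f = 1) (w : E → ℝ) :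
    osc (P *ᵥ w) ≤ (1 - 2 * ε) * osc w := by
  have hsup : (⨆ e, (P *ᵥ w) e) ≤ (⨆ f, w f) - ε * osc w :=
    ciSup_le fun e => dotProduct_le_iSup_sub hε0 (hε e) (hP e)
  have hinf : (⨅ f, w f) + ε * osc w ≤ ⨅ e, (P *ᵥ w) e :=
    le_ciInf fun e => iInf_add_le_dotProduct hε0 (hε e) (hP e)
  unfold osc at hsup hinf ⊢
  linarith

end Oscillation

lemma tendsto_zero_of_antitone_of_le_mul {a : ℕ → ℝ} (h0 : ∀ t, 0 ≤ a t) (ha : Antitone a)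
    {r : ℕ} {c : ℝ} (hc : c < 1) (hr : ∀ t, a (t + r) ≤ c * a t) :
    Tendsto a atTop (𝓝 0) := by
  have hL := tendsto_atTop_ciInf ha ⟨0, Set.forall_mem_range.2 h0⟩
  have hL0 : 0 ≤ ⨅ t, a t := le_ciInf h0
  have hLc : ⨅ t, a t ≤ c * ⨅ t, a t :=
    le_of_tendsto_of_tendsto' ((tendsto_add_atTop_iff_nat r).2 hL) (hL.const_mul c) hr
  have hL_eq : ⨅ t, a t = 0 := by nlinarith
  rwa [hL_eq] at hL

theorem tendsto_of_stochastic_step {E : Type*} [Fintype E] {P : ℕ → Matrix E E ℝ}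
    {w : ℕ → E → ℝ} (hP0 : ∀ n e f, 0 ≤ P n e f) (hP1 : ∀ n e, ∑ f, P n e f = 1)
    (hstep : ∀ n t, w (t + n) = P n *ᵥ w t) {r : ℕ} {ε : ℝ} (hε : 0 < ε)
    (hr : ∀ e f, ε ≤ P r e f) {π : E → ℝ} (hπ0 : ∀ e, 0 ≤ π e) (hπ1 : ∑ e, π e = 1) {α : ℝ}
    (hα : ∀ t, π ⬝ᵥ w t = α) (e : E) :
    Tendsto (fun t => w t e) atTop (𝓝 α) := by
  have : Nonempty E := ⟨e⟩
  have hosc_step : ∀ t, osc (w (t + 1)) ≤ osc (w t) := fun t => by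
    simpa [hstep] using osc_mulVec_le le_rfl (hP0 1) (hP1 1) (w t)
  have hosc : Tendsto (fun t => osc (w t)) atTop (𝓝 0) :=
    tendsto_zero_of_antitone_of_le_mul (fun t => osc_nonneg _) (antitone_nat_of_succ_le hosc_step)
      (by linarith : 1 - 2 * ε < 1) fun t => hstep r t ▸ osc_mulVec_le hε.le hr (hP1 r) (w t)
  have hα_mem : ∀ t, (⨅ f, w t f) ≤ α ∧ α ≤ ⨆ f, w t f := fun t => by
    rw [← hα t]
    exact ⟨by simpa using iInf_add_le_dotProduct le_rfl hπ0 hπ1 (w := w t),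
      by simpa using dotProduct_le_iSup_sub le_rfl hπ0 hπ1 (w := w t)⟩
  refine tendsto_sub_nhds_zero_iff.1 (squeeze_zero_norm (fun t => ?_) hosc)
  have hinf := ciInf_le (Finite.bddBelow_range (w t)) e
  have hsup := le_ciSup (Finite.bddAbove_range (w t)) e
  rw [Real.norm_eq_abs, abs_sub_le_iff, osc]
  constructor <;> linarith [hα_mem t]

namespace Matrix

variable {E : Type*} {K : Matrix E E ℝ} {ρ : ℝ} {z y : E → ℝ}

noncomputable def doobTransform (K : Matrix E E ℝ) (ρ : ℝ) (z : E → ℝ) : Matrix E E ℝ :=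
  of fun e f => K e f * z f / (ρ * z e)

lemma doobTransform_nonneg (hK : ∀ e f, 0 ≤ K e f) (hρ : 0 < ρ) (hz : ∀ e, 0 < z e) (e f : E) :
    0 ≤ doobTransform K ρ z e f :=
  div_nonneg (mul_nonneg (hK e f) (hz f).le) (mul_pos hρ (hz e)).le

variable [Fintype E]

lemma pow_mulVec_eq_smul [DecidableEq E] (h : K *ᵥ z = ρ • z) (n : ℕ) :
    K ^ n *ᵥ z = ρ ^ n • z := by
  induction n with
  | zero => simp
  | succ n ih => rw [pow_succ', ← mulVec_mulVec, ih, mulVec_smul, h, smul_smul, pow_succ]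

lemma vecMul_pow_eq_smul [DecidableEq E] (h : y ᵥ* K = ρ • y) (n : ℕ) :
    y ᵥ* K ^ n = ρ ^ n • y := by
  induction n with
  | zero => simp
  | succ n ih => rw [pow_succ, ← vecMul_vecMul, ih, smul_vecMul, h, smul_smul, pow_succ]

lemma sum_doobTransform (h : K *ᵥ z = ρ • z) (hρ : ρ ≠ 0) (hz : ∀ e, z e ≠ 0) (e : E) :
    ∑ f, doobTransform K ρ z e f = 1 := by
  have hKz : ∑ f, K e f * z f = ρ * z e := congrFun h e
  simp only [doobTransform, of_apply, ← sum_div, hKz]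
  exact div_self (mul_ne_zero hρ (hz e))

lemma doobTransform_mulVec_div (hz : ∀ e, z e ≠ 0) (v : E → ℝ) (e : E) :
    (doobTransform K ρ z *ᵥ fun f => v f / z f) e = (K *ᵥ v) e / (ρ * z e) := by
  simp only [mulVec, dotProduct, doobTransform, of_apply, sum_div]
  refine sum_congr rfl fun f _ => ?_
  field_simp [hz f]

theorem IsPrimitive.tendsto_pow_mulVec_div_pow [DecidableEq E] (hK : K.IsPrimitive) (hρ : 0 < ρ)
    (hz : ∀ e, 0 < z e) (hy : ∀ e, 0 ≤ y e) (hez : K *ᵥ z = ρ • z) (hey : y ᵥ* K = ρ • y)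
    (hyz : y ⬝ᵥ z = 1) (v : E → ℝ) (e : E) :
    Tendsto (fun t => (K ^ t *ᵥ v) e / ρ ^ t) atTop (𝓝 ((y ⬝ᵥ v) * z e)) := by
  have hz0 : ∀ e, z e ≠ 0 := fun e => (hz e).ne'
  set a : ℕ → E → ℝ := fun t => (ρ ^ t)⁻¹ • (K ^ t *ᵥ v)
  set P : ℕ → Matrix E E ℝ := fun n => doobTransform (K ^ n) (ρ ^ n) z
  have hstep : ∀ n t, (fun f => a (t + n) f / z f) = P n *ᵥ fun f => a t f / z f := by
    intro n t
    ext f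
    rw [doobTransform_mulVec_div hz0, mulVec_smul, mulVec_mulVec, ← pow_add, add_comm n t]
    simp only [a, Pi.smul_apply, smul_eq_mul, pow_add]
    field_simp
  obtain ⟨r, -, hr⟩ := hK.exists_pos_pow
  obtain ⟨ε, hε, hεr⟩ : ∃ ε > 0, ∀ e f, ε ≤ P r e f := by
    have : Nonempty E := ⟨e⟩
    obtain ⟨p, hp⟩ := Finite.exists_min fun p : E × E => P r p.1 p.2
    exact ⟨_, div_pos (mul_pos (hr _ _) (hz _)) (mul_pos (pow_pos hρ r) (hz _)),
      fun e f => hp (e, f)⟩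
  have hinv : ∀ t, (fun f => y f * z f) ⬝ᵥ (fun f => a t f / z f) = y ⬝ᵥ v := fun t =>
    calc (fun f => y f * z f) ⬝ᵥ (fun f => a t f / z f) = y ⬝ᵥ a t :=
          sum_congr rfl fun f _ => by field_simp [hz0 f]
      _ = y ⬝ᵥ v := by
          rw [dotProduct_smul, dotProduct_mulVec, vecMul_pow_eq_smul hey, smul_dotProduct,
            smul_eq_mul, smul_eq_mul, inv_mul_cancel_left₀ (pow_ne_zero t hρ.ne')]
  have hw := tendsto_of_stochastic_step
    (fun n => doobTransform_nonneg (pow_apply_nonneg hK.nonneg n) (pow_pos hρ n) hz)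
    (fun n => sum_doobTransform (pow_mulVec_eq_smul hez n) (pow_ne_zero n hρ.ne') hz0)
    hstep hε hεr (fun f => mul_nonneg (hy f) (hz f).le) hyz hinv e
  refine (hw.mul_const (z e)).congr fun t => ?_
  simp only [a, Pi.smul_apply, smul_eq_mul, div_mul_cancel₀ _ (hz0 e), inv_mul_eq_div]

end Matrix

lemma one_lt_of_vecMul_eq_smul {E : Type*} [Fintype E] {K : Matrix E E ℝ} {ρ : ℝ} {y : E → ℝ}
    (hy : ∀ e, 0 < y e) (hey : y ᵥ* K = ρ • y) (hrow : ∀ e, 1 ≤ ∑ f, K e f)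
    (hrow' : ∃ e, 1 < ∑ f, K e f) : 1 < ρ := by
  obtain ⟨e₀, he₀⟩ := hrow'
  have hsum : ρ * ∑ e, y e = ∑ e, y e * ∑ f, K e f :=
    calc ρ * ∑ e, y e = (y ᵥ* K) ⬝ᵥ 1 := by simp [hey, dotProduct, mul_sum]
      _ = y ⬝ᵥ (K *ᵥ 1) := (dotProduct_mulVec _ _ _).symm
      _ = ∑ e, y e * ∑ f, K e f := by simp [mulVec, dotProduct]
  have hlt : ∑ e, y e < ∑ e, y e * ∑ f, K e f :=
    sum_lt_sum (fun e _ => le_mul_of_one_le_right (hy e).le (hrow e))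
      ⟨e₀, mem_univ _, lt_mul_of_one_lt_right (hy e₀) he₀⟩
  have hpos : 0 < ∑ e, y e := sum_pos (fun e _ => hy e) ⟨e₀, mem_univ _⟩
  nlinarith

section FlowMatrix

variable {E L : Type*} [Fintype E] [DecidableEq E] [DecidableEq L] {lam : E → L} {bar : E → E}
  {K : Matrix E E ℝ}

lemma sum_flow_row_eq_degree_sub_one (hinv : ∀ e, bar (bar e) = e)
    (hK : ∀ e f, K e f = if lam (bar f) = lam e ∧ bar f ≠ e then 1 else 0) (e : E) :
    ∑ f, K e f = #{g | lam g = lam e} - 1 := by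
  have hreindex : ∑ f, K e f = #{g | lam g = lam e ∧ g ≠ e} := by
    rw [Fintype.sum_bijective bar (Function.Involutive.bijective hinv) _
      (fun g => if lam g = lam e ∧ g ≠ e then (1 : ℝ) else 0) (hK e), sum_boole]
  have hmem : e ∈ ({g | lam g = lam e} : Finset E) := by simp
  have herase :
      ({g | lam g = lam e ∧ g ≠ e} : Finset E) = ({g | lam g = lam e} : Finset E).erase e := by
    ext g; simp [and_comm]
  rw [hreindex, herase, card_erase_of_mem hmem, Nat.cast_sub (card_pos.2 ⟨e, hmem⟩), Nat.cast_one]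

lemma one_lt_of_flow_of_vecMul_eq_smul (hinv : ∀ e, bar (bar e) = e)
    (hK : ∀ e f, K e f = if lam (bar f) = lam e ∧ bar f ≠ e then 1 else 0)
    (hdeg2 : ∀ ℓ, 2 ≤ #{e | lam e = ℓ}) (hdeg3 : ∃ ℓ, 3 ≤ #{e | lam e = ℓ}) {ρ : ℝ} {y : E → ℝ}
    (hy : ∀ e, 0 < y e) (hey : y ᵥ* K = ρ • y) : 1 < ρ := by
  obtain ⟨ℓ₀, hℓ₀⟩ := hdeg3
  obtain ⟨e₀, he₀⟩ := card_pos.1 (by omega : 0 < #{e | lam e = ℓ₀})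
  have hrow := sum_flow_row_eq_degree_sub_one hinv hK
  refine one_lt_of_vecMul_eq_smul hy hey (fun e => ?_) ⟨e₀, ?_⟩
  · have : (2 : ℝ) ≤ #{g | lam g = lam e} := by exact_mod_cast hdeg2 (lam e)
    linarith [hrow e]
  · have : (3 : ℝ) ≤ #{g | lam g = lam e₀} := by
      rw [(mem_filter.1 he₀).2]; exact_mod_cast hℓ₀
    linarith [hrow e₀]

end FlowMatrix

section GeometricMean

variable {ρ : ℝ} {b : ℕ → ℝ} {A : ℝ}

lemma tendsto_geom_sum_atTop (hρ : 1 < ρ) :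
    Tendsto (fun t => ∑ i ∈ range t, ρ ^ i) atTop atTop := by
  simp only [geom_sum_eq hρ.ne']
  exact ((tendsto_pow_atTop_atTop_of_one_lt hρ).atTop_add tendsto_const_nhds).atTop_div_const
    (by linarith)

lemma tendsto_geom_mean (hρ : 1 < ρ) (hb : Tendsto (fun i => b i / ρ ^ i) atTop (𝓝 A)) :
    Tendsto (fun t => (ρ - 1) / (ρ ^ t - 1) * ∑ i ∈ range t, b i) atTop (𝓝 A) := by
  have hρi : ∀ i : ℕ, ρ ^ i ≠ 0 := fun i => pow_ne_zero i (by linarith)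
  have hlo : (fun i => b i - A * ρ ^ i) =o[atTop] fun i => ρ ^ i := by
    have h := ((Asymptotics.isLittleO_one_iff ℝ).2 (tendsto_sub_nhds_zero_iff.2 hb)).mul_isBigO
      (Asymptotics.isBigO_refl (fun i => ρ ^ i) atTop)
    refine (h.congr_left fun i => ?_).congr_right fun i => one_mul _
    field_simp [hρi i]
  have hsum := (hlo.sum_range (fun i => pow_nonneg (by linarith) i)
    (tendsto_geom_sum_atTop hρ)).tendsto_div_nhds_zero
  refine tendsto_sub_nhds_zero_iff.1 (hsum.congr' ?_)
  filter_upwards [eventually_gt_atTop 0] with t ht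
  have : ρ ^ t - 1 ≠ 0 := (sub_pos.2 (one_lt_pow₀ hρ ht.ne')).ne'
  have : ρ - 1 ≠ 0 := (sub_pos.2 hρ).ne'
  rw [sum_sub_distrib, ← mul_sum, geom_sum_eq hρ.ne']
  field_simp

lemma tendsto_sum_range_atTop_of_div_pow (hρ : 1 < ρ)
    (hb : Tendsto (fun i => b i / ρ ^ i) atTop (𝓝 A)) (hA : 0 < A) :
    Tendsto (fun t => ∑ i ∈ range t, b i) atTop atTop := by
  refine ((tendsto_geom_sum_atTop hρ).atTop_mul_pos hA (tendsto_geom_mean hρ hb)).congr' ?_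
  filter_upwards [eventually_gt_atTop 0] with t ht
  have : ρ ^ t - 1 ≠ 0 := (sub_pos.2 (one_lt_pow₀ hρ ht.ne')).ne'
  have : ρ - 1 ≠ 0 := (sub_pos.2 hρ).ne'
  rw [geom_sum_eq hρ.ne']
  field_simp

lemma tendsto_sum_range_atBot_of_div_pow (hρ : 1 < ρ)
    (hb : Tendsto (fun i => b i / ρ ^ i) atTop (𝓝 A)) (hA : A < 0) :
    Tendsto (fun t => ∑ i ∈ range t, b i) atTop atBot := by
  have hneg := tendsto_sum_range_atTop_of_div_pow hρ (b := fun i => -b i)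
    (by simpa only [neg_div] using hb.neg) (neg_pos.2 hA)
  simpa only [sum_neg_distrib, tendsto_neg_atTop_iff] using hneg

end GeometricMean

lemma prod_rpow_eq_exp_dotProduct {L : Type*} [Fintype L] {u : L → ℝ} (hu : ∀ ℓ, 0 < u ℓ)
    (a : L → ℝ) : ∏ ℓ, u ℓ ^ a ℓ = Real.exp (a ⬝ᵥ fun ℓ => Real.log (u ℓ)) := by
  rw [dotProduct, Real.exp_sum]
  exact prod_congr rfl fun ℓ _ => by rw [Real.rpow_def_of_pos (hu ℓ), mul_comm]

lemma mulVec_incidence {E L : Type*} [Fintype L] [DecidableEq L] {lam : E → L}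
    {Lam : Matrix E L ℝ} (hLam : ∀ e ℓ, Lam e ℓ = if lam e = ℓ then 1 else 0) (g : L → ℝ) :
    Lam *ᵥ g = fun e => g (lam e) := by
  ext e
  simp [mulVec, dotProduct, hLam]

theorem spa_convergence_primitive_general
    {E L : Type*} [Fintype E] [DecidableEq E] [Fintype L] [DecidableEq L]
    (lam : E → L) (bar : E → E)
    (hinv : ∀ e, bar (bar e) = e)
    (hdeg2 : ∀ ℓ : L, 2 ≤ (Finset.univ.filter fun e => lam e = ℓ).card)
    (hdeg3 : ∃ ℓ : L, 3 ≤ (Finset.univ.filter fun e => lam e = ℓ).card)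
    (Lam : Matrix E L ℝ) (hLam : ∀ e ℓ, Lam e ℓ = if lam e = ℓ then 1 else 0)
    (K : Matrix E E ℝ)
    (hK : ∀ e f, K e f = if lam (bar f) = lam e ∧ bar f ≠ e then 1 else 0)
    (hprim : ∃ r : ℕ, 0 < r ∧ ∀ e f, 0 < (K ^ r) e f)
    (ρ : ℝ) (z y : E → ℝ) (hz : ∀ e, 0 < z e) (hy : ∀ e, 0 < y e)
    (hez : K.mulVec z = ρ • z) (hey : Matrix.vecMul y K = ρ • y)
    (hnorm : ∑ e, y e * z e = 1)
    (u : L → ℝ) (hu : ∀ ℓ, 0 < u ℓ)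
    (x : ℕ → E → ℝ)
    (hx : ∀ t e, x t e =
      ∏ ℓ, u ℓ ^ (((∑ i ∈ Finset.range t, K ^ i) * Lam) e ℓ)) :
    (∀ e, Tendsto (fun t : ℕ => (x t e) ^ ((ρ - 1) / (ρ ^ t - 1)))
      atTop (nhds ((∏ ℓ, u ℓ ^ (∑ e', y e' * Lam e' ℓ)) ^ (z e)))) ∧
    ((∏ ℓ, u ℓ ^ (∑ e', y e' * Lam e' ℓ)) < 1 →
      ∀ e, Tendsto (fun t => x t e) atTop (nhds 0)) ∧
    (1 < (∏ ℓ, u ℓ ^ (∑ e', y e' * Lam e' ℓ)) →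
      ∀ e, Tendsto (fun t => x t e) atTop atTop) := by
  have hρ : 1 < ρ := one_lt_of_flow_of_vecMul_eq_smul hinv hK hdeg2 hdeg3 hy hey
  set v : E → ℝ := fun e => Real.log (u (lam e))
  have hlim : ∀ e, Tendsto (fun i => (K ^ i *ᵥ v) e / ρ ^ i) atTop (𝓝 ((y ⬝ᵥ v) * z e)) :=
    IsPrimitive.tendsto_pow_mulVec_div_pow ⟨fun e f => by rw [hK]; split_ifs <;> norm_num, hprim⟩
      (by linarith) hz (fun e => (hy e).le) hez hey hnorm v
  have hx_exp : ∀ t e, x t e = Real.exp (∑ i ∈ range t, (K ^ i *ᵥ v) e) := fun t e => by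
    rw [hx, prod_rpow_eq_exp_dotProduct hu]
    change Real.exp ((((∑ i ∈ range t, K ^ i) * Lam) *ᵥ _) e) = _
    rw [← mulVec_mulVec, mulVec_incidence hLam, sum_mulVec, Finset.sum_apply]
  have hbase : ∏ ℓ, u ℓ ^ (∑ e', y e' * Lam e' ℓ) = Real.exp (y ⬝ᵥ v) := by
    rw [prod_rpow_eq_exp_dotProduct hu]
    change Real.exp ((y ᵥ* Lam) ⬝ᵥ _) = _
    rw [← dotProduct_mulVec, mulVec_incidence hLam]
  simp only [hbase, hx_exp]
  refine ⟨fun e => ?_, fun h e => ?_, fun h e => ?_⟩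
  · simp only [← Real.exp_mul]
    exact (Real.continuous_exp.tendsto _).comp
      ((tendsto_geom_mean hρ (hlim e)).congr fun t => mul_comm _ _)
  · exact Real.tendsto_exp_atBot.comp (tendsto_sum_range_atBot_of_div_pow hρ (hlim e)
      (mul_neg_of_neg_of_pos (Real.exp_lt_one_iff.1 h) (hz e)))
  · exact Real.tendsto_exp_atTop.comp (tendsto_sum_range_atTop_of_div_pow hρ (hlim e)
      (mul_pos (Real.one_lt_exp_iff.1 h) (hz e)))

/-- Let `B` be a connected bipartite graph with all check nodes of
degree 2 (encoded by bit-node set `L`, edge set `E`, source map `lam : E → L`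
and the fixed-point-free conjugation `bar` pairing the two edges at each check),
all bit nodes of degree ≥ 2 and some bit node of degree ≥ 3.  Let `Λ` be the
edge–bit incidence matrix and `K` the flow matrix
(`K e f = 1` iff `lam (bar f) = lam e` and `bar f ≠ e`), and suppose `K` is
primitive with Perron eigenvalue `ρ`, right Perron vector `z` and left Perron
vector `y*` (positive eigenvectors) with `y* z = 1`.  Set `c = y* Λ`.  The SPA
messages are `x⁽ᵗ⁾_e = u^{a⁽ᵗ⁾_e}` with `A⁽ᵗ⁾ = (Σ_{i<t} K^i) Λ`.  Then for
every edge `e`,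
`lim_{t→∞} (x⁽ᵗ⁾_e)^{(ρ−1)/(ρ^t−1)} = (u^c)^{z_e}`; consequently
`x⁽ᵗ⁾_e → 0` for all `e` when `u^c < 1`, and `x⁽ᵗ⁾_e → ∞` for all `e` when
`u^c > 1`. -/
theorem spa_convergence_primitive
    {E L : Type*} [Fintype E] [DecidableEq E] [Fintype L] [DecidableEq L]
    (lam : E → L) (bar : E → E)
    (hinv : ∀ e, bar (bar e) = e) (hne : ∀ e, bar e ≠ e)
    (hconn : ∀ a b : L,
      Relation.ReflTransGen (fun a b => ∃ e, lam e = a ∧ lam (bar e) = b) a b)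
    (hdeg2 : ∀ ℓ : L, 2 ≤ (Finset.univ.filter fun e => lam e = ℓ).card)
    (hdeg3 : ∃ ℓ : L, 3 ≤ (Finset.univ.filter fun e => lam e = ℓ).card)
    (Lam : Matrix E L ℝ) (hLam : ∀ e ℓ, Lam e ℓ = if lam e = ℓ then 1 else 0)
    (K : Matrix E E ℝ)
    (hK : ∀ e f, K e f = if lam (bar f) = lam e ∧ bar f ≠ e then 1 else 0)
    (hprim : ∃ r : ℕ, 0 < r ∧ ∀ e f, 0 < (K ^ r) e f)
    (ρ : ℝ) (z y : E → ℝ) (hz : ∀ e, 0 < z e) (hy : ∀ e, 0 < y e)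
    (hez : K.mulVec z = ρ • z) (hey : Matrix.vecMul y K = ρ • y)
    (hnorm : ∑ e, y e * z e = 1)
    (u : L → ℝ) (hu : ∀ ℓ, 0 < u ℓ)
    (x : ℕ → E → ℝ)
    (hx : ∀ t e, x t e =
      ∏ ℓ, u ℓ ^ (((∑ i ∈ Finset.range t, K ^ i) * Lam) e ℓ)) :
    (∀ e, Tendsto (fun t : ℕ => (x t e) ^ ((ρ - 1) / (ρ ^ t - 1)))
      atTop (nhds ((∏ ℓ, u ℓ ^ (∑ e', y e' * Lam e' ℓ)) ^ (z e)))) ∧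
    ((∏ ℓ, u ℓ ^ (∑ e', y e' * Lam e' ℓ)) < 1 →
      ∀ e, Tendsto (fun t => x t e) atTop (nhds 0)) ∧
    (1 < (∏ ℓ, u ℓ ^ (∑ e', y e' * Lam e' ℓ)) →
      ∀ e, Tendsto (fun t => x t e) atTop atTop) :=
  spa_convergence_primitive_general lam bar hinv hdeg2 hdeg3 Lam hLam K hK hprim ρ z y hz hy hez hey
    hnorm u hu x hx
end

section
/- Let G be a d-regular undirected graph with n vertices (d ≥ 3) whose flow matrix K is primitive. Then the Perron eigenvalue of K is ρ = d − 1, the Perron vectors are constant, and the convergence criterion vector c = y*Λ is a positive multiple of the all-ones vector; hence the sum-product algorithm on the associated bipartite graph converges to 0 if ∏_ℓ u_ℓ < 1 and to ∞ if ∏_ℓ u_ℓ > 1. -/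
/-! The flow matrix `K` of a `d`-regular graph has all row and column sums `d - 1`, so
`K = (d - 1) • P` with `P` doubly stochastic. If all entries of `P ^ r` are `≥ δ > 0`, each
application of `P ^ r` contracts the oscillation `max w - min w` by the factor `1 - δ |E|`, while
`P` preserves `∑ w`; hence `P ^ i w` tends to the constant vector `(∑ w) / |E|`. Now
`log x t = (∑_{i<t} K ^ i) w` with `w = log ∘ u ∘ σ`, and `∑ w = d log ∏ u`. If this is positive,
the terms `K ^ i w = (d - 1) ^ i P ^ i w` are eventually bounded below by a positive constant, so
`log x t → ∞`; if negative, apply this to `-w`. -/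

open Filter Finset Matrix Topology

theorem tendsto_sum_range_atTop_of_eventually_le {f : ℕ → ℝ} {c : ℝ} (hc : 0 < c)
    (hf : ∀ᶠ i in atTop, c ≤ f i) : Tendsto (fun t => ∑ i ∈ range t, f i) atTop atTop := by
  obtain ⟨N, hN⟩ := eventually_atTop.mp hf
  rw [← tendsto_add_atTop_iff_nat N]
  refine tendsto_atTop_mono (fun t => ?_) (tendsto_atTop_add_const_left _ (∑ i ∈ range N, f i)
    (tendsto_natCast_atTop_atTop.atTop_mul_const hc))
  rw [add_comm t N, sum_range_add]
  gcongr
  calc (t : ℝ) * c = ∑ _i ∈ range t, c := by simp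
    _ ≤ ∑ i ∈ range t, f (N + i) := sum_le_sum fun i _ => hN _ (Nat.le_add_right N i)

theorem abs_sub_sum_div_card_le {E : Type*} [Fintype E] {v : E → ℝ} {B : ℝ}
    (hv : ∀ e e', v e - v e' ≤ B) (e : E) :
    |v e - (∑ e', v e') / Fintype.card E| ≤ B := by
  have hm : (0 : ℝ) < Fintype.card E := by
    have : Nonempty E := ⟨e⟩
    exact_mod_cast Fintype.card_pos
  have hsum : v e - (∑ e', v e') / Fintype.card E
      = (∑ e', (v e - v e')) / Fintype.card E := by
    rw [sum_sub_distrib, sum_const, card_univ, nsmul_eq_mul]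
    field_simp
  rw [hsum, abs_div, abs_of_pos hm, div_le_iff₀ hm, abs_le]
  constructor
  · calc -(B * Fintype.card E) = ∑ e' : E, -B := by simp [mul_comm]
      _ ≤ ∑ e', (v e - v e') := sum_le_sum fun e' _ => by linarith [hv e' e]
  · calc ∑ e', (v e - v e') ≤ ∑ _e' : E, B := sum_le_sum fun e' _ => hv e e'
      _ = B * Fintype.card E := by simp [mul_comm]

section Stochastic

variable {E : Type*} [Fintype E] [DecidableEq E]

theorem mulVec_sub_mulVec_le_of_mem_rowStochastic {P : Matrix E E ℝ} (hP : P ∈ rowStochastic ℝ E)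
    {δ M : ℝ} (hδ : ∀ e f, δ ≤ P e f) {w : E → ℝ} (hw : ∀ f f', w f - w f' ≤ M) (e e' : E) :
    (P *ᵥ w) e - (P *ᵥ w) e' ≤ (1 - δ * Fintype.card E) * M := by
  obtain ⟨f₀, -, hf₀⟩ := exists_min_image univ w ⟨e, mem_univ e⟩
  have hrow := sum_row_of_mem_rowStochastic hP
  -- rows sum to one, so we may shift `w` by its minimum `w f₀`
  have hshift : (P *ᵥ w) e - (P *ᵥ w) e' = ∑ f, (P e f - P e' f) * (w f - w f₀) := by
    simp only [mulVec, dotProduct, sub_mul, mul_sub, sum_sub_distrib, ← sum_mul, hrow]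
    ring
  have hterm : ∀ f, (P e f - P e' f) * (w f - w f₀) ≤ (P e f - δ) * M := fun f => by
    have h₀ : 0 ≤ w f - w f₀ := sub_nonneg.mpr (hf₀ f (mem_univ f))
    rcases le_total (P e' f) (P e f) with h | h
    · nlinarith [hδ e' f, hw f f₀]
    · nlinarith [hδ e f, hw f f₀]
  calc (P *ᵥ w) e - (P *ᵥ w) e' ≤ ∑ f, (P e f - δ) * M :=
        hshift ▸ sum_le_sum fun f _ => hterm f
    _ = (1 - δ * Fintype.card E) * M := by
      simp only [sub_mul, sum_sub_distrib, ← sum_mul, hrow, sum_const, card_univ, nsmul_eq_mul]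
      ring

theorem pow_mulVec_sub_le_of_mem_rowStochastic {P : Matrix E E ℝ} (hP : P ∈ rowStochastic ℝ E)
    {r : ℕ} (hr : 0 < r) {δ M : ℝ} (hδ : ∀ e f, δ ≤ (P ^ r) e f) {w : E → ℝ}
    (hw : ∀ f f', w f - w f' ≤ M) (i : ℕ) (e e' : E) :
    (P ^ i *ᵥ w) e - (P ^ i *ᵥ w) e' ≤ (1 - δ * Fintype.card E) ^ (i / r) * M := by
  induction i using Nat.strong_induction_on generalizing e e' with
  | _ i ih =>
  rcases lt_or_ge i r with hi | hi
  · simpa [Nat.div_eq_of_lt hi] using mulVec_sub_mulVec_le_of_mem_rowStochastic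
      (pow_mem hP i) (fun e f => nonneg_of_mem_rowStochastic (pow_mem hP i)) hw e e'
  · obtain ⟨j, rfl⟩ := Nat.exists_eq_add_of_le' hi
    rw [Nat.add_div_right j hr, add_comm j r, pow_add, ← mulVec_mulVec, pow_succ', mul_assoc]
    exact mulVec_sub_mulVec_le_of_mem_rowStochastic (pow_mem hP r) hδ
      (ih j (by omega)) e e'

theorem tendsto_pow_mulVec_of_mem_doublyStochastic {P : Matrix E E ℝ}
    (hP : P ∈ doublyStochastic ℝ E) {r : ℕ} (hr : 0 < r) (hprim : ∀ e f, 0 < (P ^ r) e f)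
    (w : E → ℝ) (e : E) :
    Tendsto (fun i => (P ^ i *ᵥ w) e) atTop (𝓝 ((∑ f, w f) / Fintype.card E)) := by
  have hProw := (mem_doublyStochastic_iff_mem_rowStochastic_and_mem_colStochastic.1 hP).1
  have : Nonempty E := ⟨e⟩
  obtain ⟨p, hp⟩ := Finite.exists_min fun p : E × E => (P ^ r) p.1 p.2
  set δ := (P ^ r) p.1 p.2
  have hq0 : 0 ≤ 1 - δ * Fintype.card E := by
    have : ∑ _f : E, δ ≤ ∑ f, (P ^ r) e f := sum_le_sum fun f _ => hp (e, f)
    rw [sum_row_of_mem_rowStochastic (pow_mem hProw r), sum_const, card_univ, nsmul_eq_mul] at this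
    linarith
  have hq1 : 1 - δ * Fintype.card E < 1 := by
    have : (0 : ℝ) < Fintype.card E := by exact_mod_cast Fintype.card_pos
    nlinarith [hprim p.1 p.2]
  obtain ⟨f₀, hf₀⟩ := Finite.exists_min w
  obtain ⟨f₁, hf₁⟩ := Finite.exists_max w
  have hw : ∀ f f', w f - w f' ≤ w f₁ - w f₀ := fun f f' => by linarith [hf₀ f', hf₁ f]
  have hbound : ∀ i, ‖(P ^ i *ᵥ w) e - (∑ f, w f) / Fintype.card E‖
      ≤ (1 - δ * Fintype.card E) ^ (i / r) * (w f₁ - w f₀) := fun i => by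
    rw [Real.norm_eq_abs, ← sum_mulVec_of_mem_doublyStochastic (pow_mem hP i)]
    exact abs_sub_sum_div_card_le
      (pow_mulVec_sub_le_of_mem_rowStochastic hProw hr (fun e f => hp (e, f)) hw i) e
  have hq : Tendsto (fun i => (1 - δ * Fintype.card E) ^ (i / r) * (w f₁ - w f₀))
      atTop (𝓝 0) := by
    simpa using ((tendsto_pow_atTop_nhds_zero_of_lt_one hq0 hq1).comp
      (Nat.tendsto_div_const_atTop hr.ne')).mul_const (w f₁ - w f₀)
  exact tendsto_iff_norm_sub_tendsto_zero.2 (squeeze_zero (fun _ => norm_nonneg _) hbound hq)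

theorem tendsto_sum_range_pow_mulVec_atTop {K : Matrix E E ℝ} {R : ℝ} (hR : 1 ≤ R)
    (hK : ∀ e f, 0 ≤ K e f) (hrow : K *ᵥ 1 = R • 1) (hcol : 1 ᵥ* K = R • 1) {r : ℕ} (hr : 0 < r)
    (hprim : ∀ e f, 0 < (K ^ r) e f) {w : E → ℝ} (hw : 0 < ∑ f, w f) (e : E) :
    Tendsto (fun t => ((∑ i ∈ range t, K ^ i) *ᵥ w) e) atTop atTop := by
  obtain ⟨P, hP, rfl⟩ := (exists_mem_doublyStochastic_eq_smul_iff (zero_le_one.trans hR)).2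
    ⟨hK, fun e => by simpa [mulVec, dotProduct] using congrFun hrow e,
      fun f => by simpa [vecMul, dotProduct] using congrFun hcol f⟩
  have hPprim : ∀ e f, 0 < (P ^ r) e f := fun e f => by
    have := hprim e f
    rw [smul_pow, Matrix.smul_apply, smul_eq_mul] at this
    exact pos_of_mul_pos_right this (by positivity)
  have : Nonempty E := ⟨e⟩
  have hc : 0 < (∑ f, w f) / Fintype.card E := by positivity
  have hlim := tendsto_pow_mulVec_of_mem_doublyStochastic hP hr hPprim w e
  simp only [sum_mulVec, Finset.sum_apply]
  refine tendsto_sum_range_atTop_of_eventually_le (half_pos hc) ?_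
  filter_upwards [hlim.eventually_const_lt (half_lt_self hc)] with i hi
  rw [smul_pow, smul_mulVec, Pi.smul_apply, smul_eq_mul]
  nlinarith [one_le_pow₀ hR (n := i)]

end Stochastic

section FlowGraph

variable {E V : Type*}

def flowMatrix [DecidableEq E] [DecidableEq V] (σ τ : E → V) (bar : E → E) : Matrix E E ℝ :=
  of fun e f => if τ f = σ e ∧ f ≠ bar e then 1 else 0

def edgeVertexMatrix [DecidableEq V] (σ : E → V) : Matrix E V ℝ :=
  of fun e v => if σ e = v then 1 else 0

variable {σ τ : E → V} {bar : E → E}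

theorem flowMatrix_nonneg [DecidableEq E] [DecidableEq V] (e f : E) :
    0 ≤ flowMatrix σ τ bar e f := by
  unfold flowMatrix; simp only [of_apply]; split_ifs <;> norm_num

theorem flowMatrix_apply_bar [DecidableEq E] [DecidableEq V] (hinv : Function.Involutive bar)
    (hbar : ∀ e, τ (bar e) = σ e) (e f : E) :
    flowMatrix σ τ bar (bar f) (bar e) = flowMatrix σ τ bar e f := by
  have hσ : σ (bar f) = τ f := by rw [← hbar, hinv]
  simp only [flowMatrix, of_apply, hbar, hσ, hinv f, eq_comm (a := σ e), ne_comm (a := bar e)]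

theorem card_filter_source_eq_card_filter_target [Fintype E] [DecidableEq V]
    (hinv : Function.Involutive bar) (hbar : ∀ e, τ (bar e) = σ e) (v : V) :
    #{e | σ e = v} = #{e | τ e = v} :=
  card_equiv (hinv.toPerm bar) fun e => by simp [hbar]

theorem flowMatrix_mulVec_one [Fintype E] [DecidableEq E] [DecidableEq V]
    (hbar : ∀ e, τ (bar e) = σ e) {d : ℕ} (hreg : ∀ v, #{e | τ e = v} = d) :
    flowMatrix σ τ bar *ᵥ 1 = ((d : ℝ) - 1) • 1 := by
  funext e
  have hfilter : ({f | τ f = σ e ∧ f ≠ bar e} : Finset E)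
      = ({f | τ f = σ e} : Finset E).erase (bar e) := by
    ext f; simp [and_comm]
  have hcard := card_erase_add_one (s := ({f | τ f = σ e} : Finset E)) (a := bar e)
    (by simp [hbar])
  simp only [mulVec, dotProduct, flowMatrix, of_apply, Pi.one_apply, mul_one, sum_boole, hfilter,
    Pi.smul_apply, smul_eq_mul]
  rw [hreg] at hcard
  rw [← hcard]; push_cast; ring

theorem one_vecMul_flowMatrix [Fintype E] [DecidableEq E] [DecidableEq V]
    (hinv : Function.Involutive bar) (hbar : ∀ e, τ (bar e) = σ e) {d : ℕ}
    (hreg : ∀ v, #{e | τ e = v} = d) : 1 ᵥ* flowMatrix σ τ bar = ((d : ℝ) - 1) • 1 := by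
  funext f
  calc (1 ᵥ* flowMatrix σ τ bar) f = ∑ e, flowMatrix σ τ bar (bar f) (bar e) := by
        simp [vecMul, dotProduct, flowMatrix_apply_bar hinv hbar]
    _ = (flowMatrix σ τ bar *ᵥ 1) (bar f) := by
        simpa [mulVec, dotProduct] using
          Equiv.sum_comp (hinv.toPerm bar) (flowMatrix σ τ bar (bar f))
    _ = (((d : ℝ) - 1) • 1 : E → ℝ) f := by rw [flowMatrix_mulVec_one hbar hreg]; rfl

theorem edgeVertexMatrix_mulVec [Fintype V] [DecidableEq V] (L : V → ℝ) :
    edgeVertexMatrix σ *ᵥ L = fun e => L (σ e) := by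
  funext e; simp [edgeVertexMatrix, mulVec, dotProduct]

theorem const_vecMul_edgeVertexMatrix [Fintype E] [DecidableEq V] (c : ℝ) (v : V) :
    ((fun _ => c) ᵥ* edgeVertexMatrix σ) v = #{e | σ e = v} * c := by
  simp [edgeVertexMatrix, vecMul, dotProduct, sum_ite]

theorem sum_comp_eq_mul_sum [Fintype E] [Fintype V] [DecidableEq V] {d : ℕ}
    (hσ : ∀ v, #{e | σ e = v} = d) (L : V → ℝ) : ∑ e, L (σ e) = d * ∑ v, L v := by
  rw [← sum_fiberwise univ σ, mul_sum]
  refine sum_congr rfl fun v _ => ?_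
  rw [sum_congr rfl fun e he => by rw [(mem_filter.1 he).2], sum_const, hσ, nsmul_eq_mul]

end FlowGraph

theorem prod_rpow_eq_exp_mulVec_log {E V : Type*} [Fintype V] {u : V → ℝ} (hu : ∀ v, 0 < u v)
    (A : Matrix E V ℝ) (e : E) :
    ∏ v, u v ^ A e v = Real.exp ((A *ᵥ fun v => Real.log (u v)) e) := by
  simp only [Real.rpow_def_of_pos (hu _), ← Real.exp_sum, mulVec, dotProduct, mul_comm]

theorem spa_regular_graph_convergence_general
    {E V : Type*} [Fintype E] [DecidableEq E] [Fintype V] [DecidableEq V]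
    [Nonempty V]
    (σ τ : E → V) (bar : E → E)
    (hinv : ∀ e, bar (bar e) = e)
    (hbar : ∀ e, τ (bar e) = σ e)
    (d n : ℕ) (hd : 3 ≤ d) (hn : Fintype.card V = n)
    (hreg : ∀ v : V, (Finset.univ.filter fun e => τ e = v).card = d)
    (Lam : Matrix E V ℝ) (hLam : ∀ e v, Lam e v = if σ e = v then 1 else 0)
    (K : Matrix E E ℝ)
    (hK : ∀ e f, K e f = if τ f = σ e ∧ f ≠ bar e then 1 else 0)
    (hprim : ∃ r : ℕ, 0 < r ∧ ∀ e f, 0 < (K ^ r) e f)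
    (u : V → ℝ) (hu : ∀ v, 0 < u v)
    (x : ℕ → E → ℝ)
    (hx : ∀ t e, x t e =
      ∏ v, u v ^ (((∑ i ∈ Finset.range t, K ^ i) * Lam) e v)) :
    (K.mulVec (fun _ => 1) = ((d : ℝ) - 1) • (fun _ => (1 : ℝ))) ∧
    (Matrix.vecMul (fun _ => (1 : ℝ)) K = ((d : ℝ) - 1) • (fun _ => (1 : ℝ))) ∧
    (∃ α : ℝ, 0 < α ∧ ∀ v : V,
      Matrix.vecMul (fun _ => (1 : ℝ) / (n * d)) Lam v = α) ∧
    ((∏ v, u v) < 1 → ∀ e, Tendsto (fun t => x t e) atTop (nhds 0)) ∧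
    (1 < (∏ v, u v) → ∀ e, Tendsto (fun t => x t e) atTop atTop) := by
  obtain rfl : K = flowMatrix σ τ bar := Matrix.ext hK
  obtain rfl : Lam = edgeVertexMatrix σ := Matrix.ext hLam
  obtain ⟨r, hr, hKr⟩ := hprim
  have hσ v : #{e | σ e = v} = d :=
    (card_filter_source_eq_card_filter_target hinv hbar v).trans (hreg v)
  have hR : 1 ≤ (d : ℝ) - 1 := by
    have : (3 : ℝ) ≤ d := by exact_mod_cast hd
    linarith
  set w : E → ℝ := fun e => Real.log (u (σ e))
  have hxw t e : x t e = Real.exp (((∑ i ∈ range t, flowMatrix σ τ bar ^ i) *ᵥ w) e) := by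
    rw [hx, prod_rpow_eq_exp_mulVec_log hu, ← mulVec_mulVec, edgeVertexMatrix_mulVec]
  have hw : ∑ e, w e = d * Real.log (∏ v, u v) := by
    rw [Real.log_prod fun v _ => (hu v).ne']
    exact sum_comp_eq_mul_sum hσ fun v => Real.log (u v)
  have hdiverge {w' : E → ℝ} (hw' : 0 < ∑ e, w' e) := tendsto_sum_range_pow_mulVec_atTop hR
    flowMatrix_nonneg (flowMatrix_mulVec_one hbar hreg) (one_vecMul_flowMatrix hinv hbar hreg)
    hr hKr hw'
  have hd0 : (0 : ℝ) < d := by positivity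
  refine ⟨flowMatrix_mulVec_one hbar hreg, one_vecMul_flowMatrix hinv hbar hreg,
    ⟨1 / n, ?_, fun v => ?_⟩, fun hlt e => ?_, fun hgt e => ?_⟩
  · have : 0 < n := hn ▸ Fintype.card_pos
    positivity
  · rw [const_vecMul_edgeVertexMatrix, hσ]
    field_simp
  · have hneg : 0 < ∑ e, (-w) e := by
      simp only [Pi.neg_apply, sum_neg_distrib, hw]
      nlinarith [Real.log_neg (prod_pos fun v _ => hu v) hlt]
    simp_rw [hxw]
    refine Real.tendsto_exp_atBot.comp (tendsto_neg_atTop_iff.1 ?_)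
    simpa only [mulVec_neg, Pi.neg_apply] using hdiverge hneg e
  · simp_rw [hxw]
    exact Real.tendsto_exp_atTop.comp (hdiverge (by rw [hw]; nlinarith [Real.log_pos hgt]) e)

/-- Let `G` be a `d`-regular undirected graph (`d ≥ 3`) with `n`
vertices whose flow matrix `K` is primitive.  Then the Perron eigenvalue of `K`
is `ρ = d − 1` with constant Perron vectors (the all-ones vector is both a right
and a left eigenvector for `d − 1`), the convergence criterion vector
`c = y* Λ` (with `y*` the constant left Perron vector `1/(nd)`) is a positive
multiple of the all-ones vector, and hence the sum-product algorithm on the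
associated bipartite graph (messages `x⁽ᵗ⁾ = u^{(Σ_{i<t} K^i) Λ}`) converges to
`0` if `∏_ℓ u_ℓ < 1` and to `∞` if `∏_ℓ u_ℓ > 1`. -/
theorem spa_regular_graph_convergence
    {E V : Type*} [Fintype E] [DecidableEq E] [Fintype V] [DecidableEq V]
    [Nonempty V]
    (σ τ : E → V) (bar : E → E)
    (hinv : ∀ e, bar (bar e) = e) (hne : ∀ e, bar e ≠ e)
    (hbar : ∀ e, τ (bar e) = σ e)
    (d n : ℕ) (hd : 3 ≤ d) (hn : Fintype.card V = n)
    (hreg : ∀ v : V, (Finset.univ.filter fun e => τ e = v).card = d)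
    (Lam : Matrix E V ℝ) (hLam : ∀ e v, Lam e v = if σ e = v then 1 else 0)
    (K : Matrix E E ℝ)
    (hK : ∀ e f, K e f = if τ f = σ e ∧ f ≠ bar e then 1 else 0)
    (hprim : ∃ r : ℕ, 0 < r ∧ ∀ e f, 0 < (K ^ r) e f)
    (u : V → ℝ) (hu : ∀ v, 0 < u v)
    (x : ℕ → E → ℝ)
    (hx : ∀ t e, x t e =
      ∏ v, u v ^ (((∑ i ∈ Finset.range t, K ^ i) * Lam) e v)) :
    (K.mulVec (fun _ => 1) = ((d : ℝ) - 1) • (fun _ => (1 : ℝ))) ∧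
    (Matrix.vecMul (fun _ => (1 : ℝ)) K = ((d : ℝ) - 1) • (fun _ => (1 : ℝ))) ∧
    (∃ α : ℝ, 0 < α ∧ ∀ v : V,
      Matrix.vecMul (fun _ => (1 : ℝ) / (n * d)) Lam v = α) ∧
    ((∏ v, u v) < 1 → ∀ e, Tendsto (fun t => x t e) atTop (nhds 0)) ∧
    (1 < (∏ v, u v) → ∀ e, Tendsto (fun t => x t e) atTop atTop) :=
  spa_regular_graph_convergence_general σ τ bar hinv hbar d n hd hn hreg Lam hLam K hK hprim u hu x
    hx
end

section
/- Let G be an undirected graph with edge conjugation, Λ its |E| × |V| edge-source incidence matrix, K the adjacency matrix of its flow graph, and T the |E| × |E| permutation matrix of the conjugation (T_{e,\bar{e}} = 1, zero elsewhere). Then K = Λ Λᵀ T − T. -/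
/-!
Both sides are computed entrywise. `Λ Λᵀ` is the indicator of `σ e = σ f`, and right
multiplication by the permutation matrix of the involution `bar` reindexes columns by `bar`,
so `(Λ Λᵀ T) e f = [σ e = σ (bar f)] = [σ e = τ f]`. Subtracting `T e f = [f = bar e]` removes
exactly the backtracking edge, because `f = bar e` already forces `τ f = σ e`.
-/

namespace Matrix

variable {E V R : Type*} [Fintype V] [DecidableEq V] [NonAssocSemiring R]

theorem mul_transpose_apply_of_incidence (σ : E → V) {Lam : Matrix E V R}
    (hLam : ∀ e v, Lam e v = if σ e = v then 1 else 0) (e f : E) :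
    (Lam * Lamᵀ) e f = if σ e = σ f then 1 else 0 := by
  simp [mul_apply, hLam, eq_comm]

theorem mul_apply_of_involutive_permMatrix [Fintype E] [DecidableEq E] {bar : E → E}
    (hbar : Function.Involutive bar) (M : Matrix E E R) {T : Matrix E E R}
    (hT : ∀ e f, T e f = if f = bar e then 1 else 0) (e f : E) :
    (M * T) e f = M e (bar f) := by
  have hiff : ∀ g, f = bar g ↔ g = bar f := fun g => eq_comm.trans hbar.eq_iff
  simp [mul_apply, hT, hiff]

end Matrix

theorem ite_and_not_eq_sub {R : Type*} [AddGroupWithOne R] {p q : Prop} [Decidable p]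
    [Decidable q] (hqp : q → p) :
    (if p ∧ ¬q then (1 : R) else 0) = (if p then 1 else 0) - (if q then 1 else 0) := by
  by_cases hq : q
  · simp [hq, hqp hq]
  · simp [hq]

theorem flow_matrix_eq_general
    {E V : Type*} [Fintype E] [DecidableEq E] [Fintype V] [DecidableEq V]
    (σ τ : E → V) (bar : E → E)
    (hinv : ∀ e, bar (bar e) = e)
    (hbar : ∀ e, τ (bar e) = σ e)
    (Lam : Matrix E V ℝ) (hLam : ∀ e v, Lam e v = if σ e = v then 1 else 0)
    (K : Matrix E E ℝ)
    (hK : ∀ e f, K e f = if τ f = σ e ∧ f ≠ bar e then 1 else 0)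
    (T : Matrix E E ℝ)
    (hT : ∀ e f, T e f = if f = bar e then 1 else 0) :
    K = Lam * Lam.transpose * T - T := by
  have hσbar : ∀ f, σ (bar f) = τ f := fun f => by rw [← hbar, hinv]
  ext e f
  rw [Matrix.sub_apply, Matrix.mul_apply_of_involutive_permMatrix hinv _ hT,
    Matrix.mul_transpose_apply_of_incidence σ hLam, hσbar, hK, hT]
  simp only [eq_comm (a := σ e)]
  exact ite_and_not_eq_sub fun h => h ▸ hbar e

/-- Let `G` be an undirected graph with fixed-point-free edge
conjugation `bar` (with `τ(bar e) = σ e`), let `Λ` be its `|E| × |V|`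
edge–source incidence matrix (`Λ e v = 1` iff `σ e = v`), let `K` be the
adjacency matrix of its flow graph (`K e f = 1` iff `τ f = σ e` and
`f ≠ bar e`, equivalently `σ (bar f) = σ e` and `bar f ≠ e`), and let `T` be the
permutation matrix of the conjugation (`T e f = 1` iff `f = bar e`).  Then
`K = Λ Λᵀ T − T`. -/
theorem flow_matrix_eq
    {E V : Type*} [Fintype E] [DecidableEq E] [Fintype V] [DecidableEq V]
    (σ τ : E → V) (bar : E → E)
    (hinv : ∀ e, bar (bar e) = e) (hne : ∀ e, bar e ≠ e)
    (hbar : ∀ e, τ (bar e) = σ e)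
    (Lam : Matrix E V ℝ) (hLam : ∀ e v, Lam e v = if σ e = v then 1 else 0)
    (K : Matrix E E ℝ)
    (hK : ∀ e f, K e f = if τ f = σ e ∧ f ≠ bar e then 1 else 0)
    (T : Matrix E E ℝ)
    (hT : ∀ e f, T e f = if f = bar e then 1 else 0) :
    K = Lam * Lam.transpose * T - T :=
  flow_matrix_eq_general σ τ bar hinv hbar Lam hLam K hK T hT
end
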